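/- arXiv:2106.08724 — 5 statements merged into one kernel-verified Lean document; each statement's English description precedes it below -/
import Mathlib

section
/- For every rational q, there exists an order-embedding f of the rationals (with the usual order) into themselves such that: f is initial on its image (if x < f(y) then x is in the image of f), the image of f is bounded above but has no least upper bound in Q (toplessness), f is contractive (f(x) < x for all x), and f is strictly bounded above by q (f(x) < q for all x). -/
/-- For every rational `q` there is an order-embedding `f : ℚ → ℚ` (a strictly
monotone map) which is initial (everything below a value of `f` is a value of `f`),
topless (its range is bounded above but has no least upper bound), contractive
(`f x < x` for all `x`), and strictly bounded above by `q`. -/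
theorem stmt_2 (q : ℚ) :
    ∃ f : ℚ → ℚ, StrictMono f ∧
      (∀ x y : ℚ, x < f y → x ∈ Set.range f) ∧
      BddAbove (Set.range f) ∧
      (¬ ∃ b : ℚ, IsLUB (Set.range f) b) ∧
      (∀ x : ℚ, f x < x) ∧
      (∀ x : ℚ, f x < q) := by
  set t : ℚ := min q 0 with ht
  have htq : t ≤ q := min_le_left _ _
  have ht0 : t ≤ 0 := min_le_right _ _
  set r : ℝ := (t : ℝ) - Real.sqrt 2 with hr
  have hsq : Real.sqrt 2 ^ 2 = 2 := Real.sq_sqrt (by norm_num)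
  have hnn : (0:ℝ) ≤ Real.sqrt 2 := Real.sqrt_nonneg 2
  have hsqrt : (1:ℝ) < Real.sqrt 2 := by nlinarith
  have hsqrt2 : Real.sqrt 2 < 3/2 := by nlinarith
  have hirr : ∀ c : ℚ, (c : ℝ) ≠ r := by
    intro c hc
    have : Real.sqrt 2 = ((t - c : ℚ) : ℝ) := by push_cast; rw [hc, hr]; ring
    exact irrational_sqrt_two ⟨t - c, this.symm⟩
  have hrt : r < (t : ℝ) := by rw [hr]; linarith
  have ht2r : ((t - 2 : ℚ) : ℝ) < r := by push_cast; rw [hr]; linarith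
  -- subtypes
  haveI : Nonempty {x : ℚ // 0 < x} := ⟨⟨1, by norm_num⟩⟩
  haveI : NoMinOrder {x : ℚ // 0 < x} := by
    constructor; rintro ⟨a, ha⟩
    exact ⟨⟨a / 2, by linarith⟩, by simpa using by linarith⟩
  have hB32 : (t - 2 : ℚ) < t - 3/2 ∧ ((t - 3/2 : ℚ) : ℝ) < r := by
    constructor
    · linarith
    · push_cast; rw [hr]; linarith
  haveI : DenselyOrdered {x : ℚ // 0 < x} := by
    constructor; rintro ⟨a, ha⟩ ⟨b, hb⟩ hab
    have hab' : a < b := hab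
    refine ⟨⟨(a + b) / 2, by linarith⟩, ?_, ?_⟩
    · show a < (a + b) / 2; linarith
    · show (a + b) / 2 < b; linarith
  haveI : NoMaxOrder {x : ℚ // 0 < x} := by
    constructor; rintro ⟨a, ha⟩
    exact ⟨⟨a + 1, by linarith⟩, by simp⟩
  haveI hBne : Nonempty {y : ℚ // t - 2 < y ∧ ((y : ℚ) : ℝ) < r} :=
    ⟨⟨t - 3/2, hB32⟩⟩
  haveI : DenselyOrdered {y : ℚ // t - 2 < y ∧ ((y : ℚ) : ℝ) < r} := by
    constructor; rintro ⟨a, ha1, ha2⟩ ⟨b, hb1, hb2⟩ hab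
    have hab' : a < b := hab
    refine ⟨⟨(a + b) / 2, by linarith, ?_⟩, ?_, ?_⟩
    · have : ((a + b) / 2 : ℚ) < b := by linarith
      calc (((a + b) / 2 : ℚ) : ℝ) < (b : ℝ) := by exact_mod_cast this
        _ < r := hb2
    · show a < (a + b) / 2; linarith
    · show (a + b) / 2 < b; linarith
  haveI : NoMinOrder {y : ℚ // t - 2 < y ∧ ((y : ℚ) : ℝ) < r} := by
    constructor; rintro ⟨a, ha1, ha2⟩
    refine ⟨⟨(t - 2 + a) / 2, by linarith, ?_⟩, ?_⟩
    · have h1 : ((t - 2 + a) / 2 : ℚ) < a := by linarith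
      calc (((t - 2 + a) / 2 : ℚ) : ℝ) < (a : ℝ) := by exact_mod_cast h1
        _ < r := ha2
    · show (t - 2 + a) / 2 < a; linarith
  haveI : NoMaxOrder {y : ℚ // t - 2 < y ∧ ((y : ℚ) : ℝ) < r} := by
    constructor; rintro ⟨a, ha1, ha2⟩
    obtain ⟨c, hc1, hc2⟩ := exists_rat_btwn ha2
    refine ⟨⟨c, ?_, hc2⟩, ?_⟩
    · have : (a : ℝ) < (c : ℝ) := hc1
      have : a < c := by exact_mod_cast this
      linarith
    · show a < c; exact_mod_cast hc1
  obtain ⟨e⟩ := Order.iso_of_countable_dense {x : ℚ // 0 < x}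
      {y : ℚ // t - 2 < y ∧ ((y : ℚ) : ℝ) < r}
  set f : ℚ → ℚ := fun x => if h : 0 < x then (e ⟨x, h⟩).val else x + (t - 2) with hf
  have hfpos : ∀ x (h : 0 < x), f x = (e ⟨x, h⟩).val := by
    intro x h; simp [hf, h]
  have hfneg : ∀ x, ¬ 0 < x → f x = x + (t - 2) := by
    intro x h; simp [hf, h]
  -- key bound
  have hbound : ∀ x, ((f x : ℚ) : ℝ) < r := by
    intro x
    by_cases h : 0 < x
    · rw [hfpos x h]; exact (e ⟨x, h⟩).2.2
    · rw [hfneg x h]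
      push_neg at h
      have : (x + (t - 2) : ℚ) ≤ t - 2 := by linarith
      calc ((x + (t - 2) : ℚ) : ℝ) ≤ ((t - 2 : ℚ) : ℝ) := by exact_mod_cast this
        _ < r := ht2r
  have hlow : ∀ x (h : 0 < x), t - 2 < f x := by
    intro x h; rw [hfpos x h]; exact (e ⟨x, h⟩).2.1
  have hmono : StrictMono f := by
    intro x y hxy
    by_cases hx : 0 < x
    · have hy : 0 < y := lt_trans hx hxy
      rw [hfpos x hx, hfpos y hy]
      exact e.strictMono (by exact hxy)
    · by_cases hy : 0 < y
      · rw [hfneg x hx]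
        push_neg at hx
        have : x + (t - 2) ≤ t - 2 := by linarith
        exact lt_of_le_of_lt this (hlow y hy)
      · rw [hfneg x hx, hfneg y hy]; linarith
  -- range description
  have hrange : ∀ x : ℚ, ((x : ℚ) : ℝ) < r → x ∈ Set.range f := by
    intro x hx
    by_cases hx2 : t - 2 < x
    · refine ⟨(e.symm ⟨x, hx2, hx⟩).val, ?_⟩
      have hpos : 0 < (e.symm ⟨x, hx2, hx⟩).val := (e.symm ⟨x, hx2, hx⟩).2
      rw [hfpos _ hpos]
      have : (⟨(e.symm ⟨x, hx2, hx⟩).val, hpos⟩ : {x : ℚ // 0 < x}) =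
          e.symm ⟨x, hx2, hx⟩ := Subtype.ext rfl
      rw [this, e.apply_symm_apply]
    · push_neg at hx2
      refine ⟨x - (t - 2), ?_⟩
      have hnp : ¬ 0 < x - (t - 2) := by push_neg; linarith
      rw [hfneg _ hnp]; ring
  refine ⟨f, hmono, ?_, ⟨t, ?_⟩, ?_, ?_, ?_⟩
  · intro x y hxy
    apply hrange
    calc ((x : ℚ) : ℝ) < ((f y : ℚ) : ℝ) := by exact_mod_cast hxy
      _ < r := hbound y
  · rintro z ⟨x, rfl⟩
    have : ((f x : ℚ) : ℝ) < (t : ℝ) := lt_trans (hbound x) hrt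
    exact le_of_lt (by exact_mod_cast this)
  · rintro ⟨b, hub, hleast⟩
    have hbr : r < (b : ℝ) := by
      rcases lt_trichotomy ((b : ℝ)) r with h | h | h
      · obtain ⟨c, hc1, hc2⟩ := exists_rat_btwn h
        obtain ⟨x, hx⟩ := hrange c hc2
        have : c ≤ b := hub ⟨x, hx⟩
        have : (c : ℝ) ≤ (b : ℝ) := by exact_mod_cast this
        linarith
      · exact absurd h (hirr b)
      · exact h
    obtain ⟨c, hc1, hc2⟩ := exists_rat_btwn hbr
    have hcub : c ∈ upperBounds (Set.range f) := by
      rintro z ⟨x, rfl⟩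
      have : ((f x : ℚ) : ℝ) < (c : ℝ) := lt_trans (hbound x) hc1
      exact le_of_lt (by exact_mod_cast this)
    have : b ≤ c := hleast hcub
    have : (b : ℝ) ≤ (c : ℝ) := by exact_mod_cast this
    linarith
  · intro x
    by_cases h : 0 < x
    · have : ((f x : ℚ) : ℝ) < (x : ℝ) := by
        calc ((f x : ℚ) : ℝ) < r := hbound x
          _ < (t : ℝ) := hrt
          _ ≤ 0 := by exact_mod_cast ht0
          _ < (x : ℝ) := by exact_mod_cast h
      exact_mod_cast this
    · rw [hfneg x h]; linarith
  · intro x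
    have : ((f x : ℚ) : ℝ) < (q : ℝ) := by
      calc ((f x : ℚ) : ℝ) < r := hbound x
        _ < (t : ℝ) := hrt
        _ ≤ (q : ℝ) := by exact_mod_cast htq
    exact_mod_cast this
end

section
/- There exists a first-order structure (Q', <, f), where (Q', <) is a countable dense linear order without endpoints and f is a unary function, satisfying: f is strictly order-preserving; if x < f(y) then x is in the range of f; the range of f is bounded above; for every upper bound y of the range of f there is a strictly smaller upper bound y' < y; and f(x) < x for all x. -/
/-!
Take `ℚ ×ₗ ℚ` and `f (a, q) = (g a, q)`, where `g` is an order isomorphism of `ℚ` onto the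
negative rationals with `g a < a`. The range of `f` is then the initial segment `{(a, q) | a < 0}`,
whose upper bounds are the pairs `(a, q)` with `0 ≤ a`; such a pair always lies above `(a, q - 1)`,
so there is no least upper bound.
-/

open Set

/-- `x ↦ x - 1` maps `(-∞, 0]` onto `(-∞, -1]` and `x ↦ -(x + 1)⁻¹` maps `(0, ∞)` onto `(-1, 0)`. -/
def squeezeNeg (x : ℚ) : ℚ := if x ≤ 0 then x - 1 else -(x + 1)⁻¹

lemma squeezeNeg_neg (x : ℚ) : squeezeNeg x < 0 := by
  unfold squeezeNeg
  split_ifs with hx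
  · linarith
  · exact neg_neg_of_pos (inv_pos.2 (by linarith))

lemma squeezeNeg_lt_self (x : ℚ) : squeezeNeg x < x := by
  rcases le_or_gt x 0 with hx | hx
  · rw [squeezeNeg, if_pos hx]
    linarith
  · exact (squeezeNeg_neg x).trans hx

lemma strictMono_squeezeNeg : StrictMono squeezeNeg := by
  intro x y hxy
  unfold squeezeNeg
  split_ifs with hx hy hy
  · linarith
  · have : (y + 1)⁻¹ < 1 := inv_lt_one_of_one_lt₀ (by linarith)
    linarith
  · linarith
  · have := inv_strictAnti₀ (by linarith : (0 : ℚ) < x + 1) (by linarith : x + 1 < y + 1)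
    linarith

lemma range_squeezeNeg : range squeezeNeg = Iio 0 := by
  refine Subset.antisymm (range_subset_iff.2 squeezeNeg_neg) fun y (hy : y < 0) => ?_
  rcases le_or_gt y (-1) with hy1 | hy1
  · exact ⟨y + 1, by rw [squeezeNeg, if_pos (by linarith)]; ring⟩
  · have hinv : y⁻¹ < -1 := (inv_lt_of_neg hy (by norm_num)).2 (by simpa using hy1)
    have hpos : 0 < -y⁻¹ - 1 := by linarith
    refine ⟨-y⁻¹ - 1, ?_⟩
    rw [squeezeNeg, if_neg hpos.not_ge]
    simp

section LexMapFst

variable {α β : Type*} [LinearOrder α] [LinearOrder β] {g : α → α}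

def lexMapFst (g : α → α) (x : α ×ₗ β) : α ×ₗ β := toLex (g (ofLex x).1, (ofLex x).2)

lemma strictMono_lexMapFst (hg : StrictMono g) : StrictMono (lexMapFst (β := β) g) := by
  intro x y hxy
  rcases Prod.Lex.lt_iff.1 hxy with h | ⟨h, h'⟩
  · exact Prod.Lex.lt_iff.2 (Or.inl (hg h))
  · exact Prod.Lex.lt_iff.2 (Or.inr ⟨congrArg g h, h'⟩)

lemma isLowerSet_range_lexMapFst (hg : IsLowerSet (range g)) :
    IsLowerSet (range (lexMapFst (β := β) g)) := by
  rintro _ x hx ⟨y, rfl⟩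
  obtain ⟨z, hz⟩ := hg (Prod.Lex.monotone_fst _ _ hx) (mem_range_self (ofLex y).1)
  exact ⟨toLex (z, (ofLex x).2), by simp [lexMapFst, hz]⟩

lemma lexMapFst_lt_self (hg : ∀ a, g a < a) (x : α ×ₗ β) : lexMapFst g x < x :=
  Prod.Lex.lt_iff.2 (Or.inl (hg _))

lemma forall_lexMapFst_lt_iff [NoMaxOrder β] {c : α} (hg : range g = Iio c) {b : α ×ₗ β} :
    (∀ x, lexMapFst g x < b) ↔ c ≤ (ofLex b).1 := by
  refine ⟨fun hb => not_lt.1 fun hbc => ?_, fun hcb x => ?_⟩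
  · obtain ⟨z, hz⟩ : (ofLex b).1 ∈ range g := hg ▸ hbc
    obtain ⟨q, hq⟩ := exists_gt (ofLex b).2
    exact (hb (toLex (z, q))).not_gt (Prod.Lex.lt_iff.2 (Or.inr ⟨hz.symm, hq⟩))
  · have : g (ofLex x).1 ∈ Iio c := hg ▸ mem_range_self _
    exact Prod.Lex.lt_iff.2 (Or.inl (this.trans_le hcb))

end LexMapFst

/-- There exists a first-order structure `(Q', <, f)` where `(Q', <)` is a countable
dense linear order without endpoints and `f` is a unary function such that: `f` is
strictly order-preserving, initial on its image, the range of `f` is bounded above,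
below every upper bound of the range there is a strictly smaller upper bound, and
`f x < x` for all `x`. -/
theorem stmt_3 :
    ∃ (Q' : Type) (lt : Q' → Q' → Prop) (f : Q' → Q'),
      Countable Q' ∧ Nonempty Q' ∧
      (∀ x, ¬ lt x x) ∧
      (∀ x y z, lt x y → lt y z → lt x z) ∧
      (∀ x y, x = y ∨ lt x y ∨ lt y x) ∧
      (∀ x y, lt x y → ∃ z, lt x z ∧ lt z y) ∧
      (∀ x, ∃ y, lt x y) ∧
      (∀ x, ∃ y, lt y x) ∧
      (∀ x y, lt x y ↔ lt (f x) (f y)) ∧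
      (∀ x y, lt x (f y) → ∃ z, f z = x) ∧
      (∃ b, ∀ x, lt (f x) b) ∧
      (∀ b, (∀ x, lt (f x) b) → ∃ b', lt b' b ∧ ∀ x, lt (f x) b') ∧
      (∀ x, lt (f x) x) := by
  have hf : StrictMono (lexMapFst (β := ℚ) squeezeNeg) := strictMono_lexMapFst strictMono_squeezeNeg
  have hbound (b : ℚ ×ₗ ℚ) := forall_lexMapFst_lt_iff (b := b) range_squeezeNeg
  refine ⟨ℚ ×ₗ ℚ, (· < ·), lexMapFst squeezeNeg, inferInstanceAs (Countable (ℚ × ℚ)),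
    inferInstance, lt_irrefl, fun _ _ _ => lt_trans, fun x y => ?_, fun _ _ => exists_between,
    exists_gt, exists_lt, fun _ _ => hf.lt_iff_lt.symm,
    fun x y hxy => isLowerSet_range_lexMapFst (range_squeezeNeg ▸ isLowerSet_Iio 0) hxy.le
      (mem_range_self y),
    ⟨toLex (0, 0), (hbound _).2 le_rfl⟩, fun b hb => ?_, lexMapFst_lt_self squeezeNeg_lt_self⟩
  · rcases lt_trichotomy x y with h | h | h <;> simp [h]
  · obtain ⟨q, hq⟩ := exists_lt (ofLex b).2
    exact ⟨toLex ((ofLex b).1, q), Prod.Lex.lt_iff.2 (Or.inr ⟨rfl, hq⟩), (hbound _).2 ((hbound b).1 hb)⟩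
end

section
/- Let M be a model of KP. An element m of M is standard (i.e., ∈^M restricted to the transitive closure of m is well-founded) if and only if its M-rank rank^M(m) is a standard ordinal of M. Consequently, if M is non-standard, the well-founded part WFP(M) is a rank-initial substructure of M that is topless: the set of ordinals of M outside WFP(M) has no least element. -/
namespace SetTh

/-- First-order formulas of the language of set theory, with `n` free variables
(de Bruijn indices). -/
inductive Fml : ℕ → Type where
  | mem {n : ℕ} (i j : Fin n) : Fml n
  | eq {n : ℕ} (i j : Fin n) : Fml n
  | not {n : ℕ} (φ : Fml n) : Fml n
  | and {n : ℕ} (φ ψ : Fml n) : Fml n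
  | all {n : ℕ} (φ : Fml (n + 1)) : Fml n

namespace Fml

def or {n : ℕ} (φ ψ : Fml n) : Fml n := Fml.not (Fml.and (Fml.not φ) (Fml.not ψ))

def imp {n : ℕ} (φ ψ : Fml n) : Fml n := Fml.or (Fml.not φ) ψ

def ex {n : ℕ} (φ : Fml (n + 1)) : Fml n := Fml.not (Fml.all (Fml.not φ))

/-- The formula `xᵢ ⊆ xⱼ`. -/
def subeq {n : ℕ} (i j : Fin n) : Fml n :=
  Fml.all (Fml.imp (Fml.mem (0 : Fin (n + 1)) i.succ) (Fml.mem (0 : Fin (n + 1)) j.succ))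

end Fml

/-- Renaming of variables. -/
def rename : (m n : ℕ) → (Fin m → Fin n) → Fml m → Fml n
  | _, _, f, Fml.mem i j => Fml.mem (f i) (f j)
  | _, _, f, Fml.eq i j => Fml.eq (f i) (f j)
  | m, n, f, Fml.not φ => Fml.not (rename m n f φ)
  | m, n, f, Fml.and φ ψ => Fml.and (rename m n f φ) (rename m n f ψ)
  | m, n, f, Fml.all φ =>
      Fml.all (rename (m + 1) (n + 1)
        (fun k => Fin.cases (0 : Fin (n + 1)) (fun i => (f i).succ) k) φ)

/-- Tarskian satisfaction for a structure `(M, E)`. -/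
def Realize {M : Type*} (E : M → M → Prop) : (n : ℕ) → Fml n → (Fin n → M) → Prop
  | _, Fml.mem i j, v => E (v i) (v j)
  | _, Fml.eq i j, v => v i = v j
  | n, Fml.not φ, v => ¬ Realize E n φ v
  | n, Fml.and φ ψ, v => Realize E n φ v ∧ Realize E n ψ v
  | n, Fml.all φ, v => ∀ x : M, Realize E (n + 1) φ (Fin.cons x v)

/-- Δ₀ formulas: all quantifiers are bounded by ∈. -/
inductive IsDelta0 : (n : ℕ) → Fml n → Prop where
  | mem {n : ℕ} (i j : Fin n) : IsDelta0 n (Fml.mem i j)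
  | eq {n : ℕ} (i j : Fin n) : IsDelta0 n (Fml.eq i j)
  | not {n : ℕ} {φ : Fml n} : IsDelta0 n φ → IsDelta0 n (Fml.not φ)
  | and {n : ℕ} {φ ψ : Fml n} : IsDelta0 n φ → IsDelta0 n ψ → IsDelta0 n (Fml.and φ ψ)
  | allMem {n : ℕ} (j : Fin n) {φ : Fml (n + 1)} :
      IsDelta0 (n + 1) φ →
      IsDelta0 n (Fml.all (Fml.imp (Fml.mem (0 : Fin (n + 1)) j.succ) φ))

/-- Δ₀^P formulas (Takahashi): quantifiers bounded by ∈ or by ⊆. -/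
inductive IsDelta0P : (n : ℕ) → Fml n → Prop where
  | mem {n : ℕ} (i j : Fin n) : IsDelta0P n (Fml.mem i j)
  | eq {n : ℕ} (i j : Fin n) : IsDelta0P n (Fml.eq i j)
  | not {n : ℕ} {φ : Fml n} : IsDelta0P n φ → IsDelta0P n (Fml.not φ)
  | and {n : ℕ} {φ ψ : Fml n} : IsDelta0P n φ → IsDelta0P n ψ → IsDelta0P n (Fml.and φ ψ)
  | allMem {n : ℕ} (j : Fin n) {φ : Fml (n + 1)} :
      IsDelta0P (n + 1) φ →
      IsDelta0P n (Fml.all (Fml.imp (Fml.mem (0 : Fin (n + 1)) j.succ) φ))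
  | allSub {n : ℕ} (j : Fin n) {φ : Fml (n + 1)} :
      IsDelta0P (n + 1) φ →
      IsDelta0P n (Fml.all (Fml.imp (Fml.subeq (0 : Fin (n + 1)) j.succ) φ))

/-- Levels of the Σ/Π hierarchy over a base class. `true` = Σ, `false` = Π. -/
def IsLvl (base : (n : ℕ) → Fml n → Prop) : Bool → ℕ → (n : ℕ) → Fml n → Prop
  | _, 0, n, φ => base n φ
  | true, k + 1, n, φ => ∃ ψ : Fml (n + 1), φ = Fml.ex ψ ∧ IsLvl base false k (n + 1) ψ
  | false, k + 1, n, φ => ∃ ψ : Fml (n + 1), φ = Fml.all ψ ∧ IsLvl base true k (n + 1) ψ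

def IsSigma (k n : ℕ) (φ : Fml n) : Prop := IsLvl IsDelta0 true k n φ
def IsPi (k n : ℕ) (φ : Fml n) : Prop := IsLvl IsDelta0 false k n φ
def IsSigmaP (k n : ℕ) (φ : Fml n) : Prop := IsLvl IsDelta0P true k n φ
def IsPiP (k n : ℕ) (φ : Fml n) : Prop := IsLvl IsDelta0P false k n φ

/-- B_k^P : closure of Σ_k^P (and Δ₀^P) under Boolean connectives and bounded quantifiers. -/
inductive IsBP (k : ℕ) : (n : ℕ) → Fml n → Prop where
  | ofSigma {n : ℕ} {φ : Fml n} : IsSigmaP k n φ → IsBP k n φ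
  | ofDelta0 {n : ℕ} {φ : Fml n} : IsDelta0P n φ → IsBP k n φ
  | not {n : ℕ} {φ : Fml n} : IsBP k n φ → IsBP k n (Fml.not φ)
  | and {n : ℕ} {φ ψ : Fml n} : IsBP k n φ → IsBP k n ψ → IsBP k n (Fml.and φ ψ)
  | allMem {n : ℕ} (j : Fin n) {φ : Fml (n + 1)} :
      IsBP k (n + 1) φ → IsBP k n (Fml.all (Fml.imp (Fml.mem (0 : Fin (n + 1)) j.succ) φ))
  | allSub {n : ℕ} (j : Fin n) {φ : Fml (n + 1)} :
      IsBP k (n + 1) φ → IsBP k n (Fml.all (Fml.imp (Fml.subeq (0 : Fin (n + 1)) j.succ) φ))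

section Axioms

variable {M : Type*}

def Extensionality (E : M → M → Prop) : Prop :=
  ∀ x y : M, (∀ u, E u x ↔ E u y) → x = y

def PairAx (E : M → M → Prop) : Prop :=
  ∀ u v : M, ∃ x, ∀ w, E w x ↔ (w = u ∨ w = v)

def UnionAx (E : M → M → Prop) : Prop :=
  ∀ x : M, ∃ u, ∀ r, E r u ↔ ∃ v, E v x ∧ E r v

def PowerAx (E : M → M → Prop) : Prop :=
  ∀ u : M, ∃ x, ∀ v, (E v x ↔ ∀ r, E r v → E r u)

def InfinityAx (E : M → M → Prop) : Prop :=
  ∃ x, (∃ e, E e x ∧ ∀ z, ¬ E z e) ∧ ∀ u, E u x → ∃ s, E s x ∧ ∀ w, (E w s ↔ w = u)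

/-- Separation schema for a class `Γ` of formulas. -/
def SepScheme (E : M → M → Prop) (Γ : (n : ℕ) → Fml n → Prop) : Prop :=
  ∀ (n : ℕ) (φ : Fml (n + 1)), Γ (n + 1) φ → ∀ (v : Fin n → M) (a : M),
    ∃ b, ∀ u, E u b ↔ (E u a ∧ Realize E (n + 1) φ (Fin.cons u v))

/-- Collection schema for a class `Γ` of formulas (variable 0 = u, variable 1 = w). -/
def CollScheme (E : M → M → Prop) (Γ : (n : ℕ) → Fml n → Prop) : Prop :=
  ∀ (n : ℕ) (φ : Fml (n + 2)), Γ (n + 2) φ → ∀ (v : Fin n → M) (x : M),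
    (∀ u, E u x → ∃ w, Realize E (n + 2) φ (Fin.cons u (Fin.cons w v))) →
    ∃ y, ∀ u, E u x → ∃ w, E w y ∧ Realize E (n + 2) φ (Fin.cons u (Fin.cons w v))

/-- Foundation schema for a class `Γ` of formulas. -/
def FndScheme (E : M → M → Prop) (Γ : (n : ℕ) → Fml n → Prop) : Prop :=
  ∀ (n : ℕ) (φ : Fml (n + 1)), Γ (n + 1) φ → ∀ (v : Fin n → M),
    (∃ a, Realize E (n + 1) φ (Fin.cons a v)) →
    ∃ a, Realize E (n + 1) φ (Fin.cons a v) ∧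
      ∀ u, E u a → ¬ Realize E (n + 1) φ (Fin.cons u v)

/-- Kripke–Platek set theory. -/
def KP (E : M → M → Prop) : Prop :=
  Extensionality E ∧ PairAx E ∧ UnionAx E ∧ InfinityAx E ∧
  SepScheme E IsDelta0 ∧ CollScheme E IsDelta0 ∧ FndScheme E (IsPi 1)

/-- Power Kripke–Platek set theory KP^P. -/
def KPP (E : M → M → Prop) : Prop :=
  Extensionality E ∧ PairAx E ∧ UnionAx E ∧ PowerAx E ∧ InfinityAx E ∧
  SepScheme E IsDelta0P ∧ CollScheme E IsDelta0P ∧ FndScheme E (IsPiP 1)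

def IsTrans (E : M → M → Prop) (a : M) : Prop := ∀ x, E x a → ∀ y, E y x → E y a

/-- `a` is an ordinal of `(M, E)`: transitive, with transitive members,
linearly ordered by `E`. -/
def IsOrd (E : M → M → Prop) (a : M) : Prop :=
  IsTrans E a ∧ (∀ x, E x a → IsTrans E x) ∧
  (∀ x, E x a → ∀ y, E y a → x = y ∨ E x y ∨ E y x)

def OrdLE (E : M → M → Prop) (a b : M) : Prop := a = b ∨ E a b

/-- `rk` is the (unique, definable) rank function of `(M, E)`:
`rk x` is the least ordinal containing `rk y` for every `y ∈ x`. -/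
def IsRankFn (E : M → M → Prop) (rk : M → M) : Prop :=
  (∀ x, IsOrd E (rk x)) ∧
  (∀ x y, E y x → E (rk y) (rk x)) ∧
  (∀ x α, IsOrd E α → (∀ y, E y x → E (rk y) α) → OrdLE E (rk x) α)

/-- `V` is the cumulative hierarchy function of `(M, E)` relative to the rank
function `rk`: for an ordinal `α`, `V α` consists of the sets of rank `< α`. -/
def IsVFn (E : M → M → Prop) (rk V : M → M) : Prop :=
  ∀ α, IsOrd E α → ∀ x, (E x (V α) ↔ E (rk x) α)

/-- `p` is the internal Kuratowski ordered pair `⟨a, b⟩`. -/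
def IsOPair (E : M → M → Prop) (p a b : M) : Prop :=
  ∀ z, E z p ↔ ((∀ w, E w z ↔ w = a) ∨ (∀ w, E w z ↔ (w = a ∨ w = b)))

/-- `y` is a value of the internal function `f` at `x`. -/
def AppR (E : M → M → Prop) (f x y : M) : Prop := ∃ p, E p f ∧ IsOPair E p x y

/-- `f` is an internal function from `a` to `b`. -/
def IsIntFunc (E : M → M → Prop) (f a b : M) : Prop :=
  (∀ p, E p f → ∃ x y, E x a ∧ E y b ∧ IsOPair E p x y) ∧
  (∀ x, E x a → ∃! y, AppR E f x y)

def IsLimitOrd (E : M → M → Prop) (a : M) : Prop :=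
  IsOrd E a ∧ (∃ z, E z a) ∧ ∀ z, E z a → ∃ z', E z z' ∧ E z' a

/-- `w` is the internal ω of `(M, E)`: the least limit ordinal. -/
def IsOmega (E : M → M → Prop) (w : M) : Prop :=
  IsLimitOrd E w ∧ ∀ z, E z w → ¬ IsLimitOrd E z

end Axioms

section Embeddings

variable {M N : Type*}

def IsEmbedding (E : M → M → Prop) (E' : N → N → Prop) (i : M → N) : Prop :=
  Function.Injective i ∧ ∀ a b : M, E a b ↔ E' (i a) (i b)

def IsInitialEmb (E' : N → N → Prop) (i : M → N) : Prop :=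
  ∀ (m : M) (x : N), E' x (i m) → x ∈ Set.range i

def IsPInitialEmb (E' : N → N → Prop) (i : M → N) : Prop :=
  IsInitialEmb E' i ∧ ∀ (m : M) (x : N), (∀ z, E' z x → E' z (i m)) → x ∈ Set.range i

def IsRankInitialEmb (E' : N → N → Prop) (rk' : N → N) (i : M → N) : Prop :=
  ∀ (m : M) (x : N), OrdLE E' (rk' x) (rk' (i m)) → x ∈ Set.range i

def IsBoundedEmb (E : M → M → Prop) (E' : N → N → Prop) (i : M → N) : Prop :=
  ∃ β, IsOrd E' β ∧ ∀ a : M, IsOrd E a → E' (i a) β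

def IsToplessEmb (E : M → M → Prop) (E' : N → N → Prop) (i : M → N) : Prop :=
  IsBoundedEmb E E' i ∧
  ∀ β, IsOrd E' β → β ∉ Set.range i → ∃ β', IsOrd E' β' ∧ β' ∉ Set.range i ∧ E' β' β

end Embeddings

/-- Semantic equivalence over all models of KP^P (= provable equivalence, by
completeness). -/
def EquivOverKPP (n : ℕ) (φ ψ : Fml n) : Prop :=
  ∀ (M : Type) (E : M → M → Prop), KPP E → ∀ v : Fin n → M,
    (Realize E n φ v ↔ Realize E n ψ v)

/-- `φ` is Σ₁^P up to provable equivalence over KP^P. -/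
def Sigma1PUpto (n : ℕ) (φ : Fml n) : Prop :=
  ∃ ψ : Fml n, IsSigmaP 1 n ψ ∧ EquivOverKPP n φ ψ

end SetTh

section Aux

open SetTh

variable {M : Type} (E : M → M → Prop)

/-- The Π₁ formula `∀ z, (a = x ∨ a = y)` (vacuous quantifier), used for foundation. -/
def noCycFml : Fml 3 :=
  Fml.all (Fml.or (Fml.eq (1 : Fin 4) (2 : Fin 4)) (Fml.eq (1 : Fin 4) (3 : Fin 4)))

lemma noCycFml_pi1 : IsPi 1 3 noCycFml :=
  ⟨_, rfl, IsDelta0.not (IsDelta0.and (IsDelta0.not (IsDelta0.eq _ _))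
    (IsDelta0.not (IsDelta0.eq _ _)))⟩

lemma realize_noCyc (a x y : M) :
    Realize E 3 noCycFml (Fin.cons a ![x, y]) ↔ (a = x ∨ a = y) := by
  have h : ∀ z : M, Realize E 4
      (Fml.or (Fml.eq (1 : Fin 4) (2 : Fin 4)) (Fml.eq (1 : Fin 4) (3 : Fin 4)))
      (Fin.cons z (Fin.cons a ![x, y])) ↔ (a = x ∨ a = y) := by
    intro z
    show ¬(¬(a = x) ∧ ¬(a = y)) ↔ _
    tauto
  constructor
  · intro hr
    exact (h a).mp (hr a)
  · intro hr z
    exact (h z).mpr hr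

lemma no_cycle (hfnd : FndScheme E (IsPi 1)) : ∀ x y : M, E x y → E y x → False := by
  intro x y hxy hyx
  obtain ⟨a, ha, hmin⟩ := hfnd 2 noCycFml noCycFml_pi1 ![x, y]
    ⟨x, (realize_noCyc E x x y).mpr (Or.inl rfl)⟩
  rcases (realize_noCyc E a x y).mp ha with rfl | rfl
  · exact hmin y hyx ((realize_noCyc E y a y).mpr (Or.inr rfl))
  · exact hmin x hxy ((realize_noCyc E x x a).mpr (Or.inl rfl))

lemma mem_ord_is_ord {α β : M} (hα : IsOrd E α) (hβ : E β α) : IsOrd E β := by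
  obtain ⟨htr, hmem, hlin⟩ := hα
  refine ⟨hmem β hβ, ?_, ?_⟩
  · intro x hx
    exact hmem x (htr β hβ x hx)
  · intro x hx y hy
    exact hlin x (htr β hβ x hx) y (htr β hβ y hy)

lemma acc_of_acc_rk {rk : M → M} (hrk : IsRankFn E rk) {α : M} (h : Acc E α) :
    ∀ m, rk m = α → Acc E m := by
  induction h with
  | intro α hα ih =>
    intro m hm
    constructor
    intro y hy
    exact ih (rk y) (hm ▸ hrk.2.1 m y hy) y rfl

lemma acc_rk_of_acc (hnc : ∀ x y : M, E x y → E y x → False) {rk : M → M}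
    (hrk : IsRankFn E rk) {m : M} (h : Acc E m) : Acc E (rk m) := by
  induction h with
  | intro m hm ih =>
    constructor
    intro β hβ
    by_cases hex : ∃ y, E y m ∧ OrdLE E β (rk y)
    · obtain ⟨y, hy, hle⟩ := hex
      rcases hle with heq | hlt
      · exact heq ▸ ih y hy
      · exact (ih y hy).inv hlt
    · push_neg at hex
      have hordm := hrk.1 m
      have hβord : IsOrd E β := mem_ord_is_ord E hordm hβ
      have hall : ∀ y, E y m → E (rk y) β := by
        intro y hy
        have h1 : E (rk y) (rk m) := hrk.2.1 m y hy
        rcases hordm.2.2 _ hβ _ h1 with heq | hlt | hgt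
        · exact absurd (Or.inl heq) (by simpa [OrdLE] using hex y hy)
        · exact absurd (Or.inr hlt) (by simpa [OrdLE] using hex y hy)
        · exact hgt
      rcases hrk.2.2 m β hβord hall with heq | hlt
      · exact absurd (heq ▸ hβ) (fun hc => hnc β β hc hc)
      · exact absurd hβ (fun hc => hnc β (rk m) hc hlt)

end Aux

open SetTh in
/-- Let `M ⊨ KP`. An element is standard (accessible for `E`) iff its rank is
standard. Consequently, if `M` is non-standard, the well-founded part of `M` is a
rank-initial substructure and is topless: the non-standard ordinals have no least
element. -/
theorem stmt_9 {M : Type} (E : M → M → Prop) (hM : KP E)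
    (rk : M → M) (hrk : IsRankFn E rk) :
    (∀ m : M, Acc E m ↔ Acc E (rk m)) ∧
    ((∃ a : M, ¬ Acc E a) →
      ((∀ x y : M, Acc E x → OrdLE E (rk y) (rk x) → Acc E y) ∧
       (∀ β : M, IsOrd E β → ¬ Acc E β →
          ∃ β', IsOrd E β' ∧ ¬ Acc E β' ∧ E β' β))) := by
  have hnc := no_cycle E hM.2.2.2.2.2.2
  have main : ∀ m : M, Acc E m ↔ Acc E (rk m) := fun m =>
    ⟨acc_rk_of_acc E hnc hrk, fun h => acc_of_acc_rk E hrk h m rfl⟩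
  refine ⟨main, fun _ => ⟨?_, ?_⟩⟩
  · intro x y hx hle
    have hrx := (main x).1 hx
    have hry : Acc E (rk y) := by
      rcases hle with heq | hlt
      · exact heq ▸ hrx
      · exact hrx.inv hlt
    exact (main y).2 hry
  · intro β hβ hnacc
    by_contra hcon
    push_neg at hcon
    apply hnacc
    constructor
    intro z hz
    by_contra hz'
    exact hcon z (mem_ord_is_ord E hβ hz) hz' hz
end

section
/- Over KP^P: for each natural number k ≥ 1, the schema of Σ_k^P-Separation implies the schema of B_k^P-Foundation; i.e., if Σ_k^P-Separation holds, then for every B_k^P formula φ(x), if there exists a with φ(a), then there exists a' with φ(a') such that no element of a' satisfies φ. -/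
/-!
Separation for a class of formulas gives foundation for it: if `φ(a)` holds, take a transitive
`t ∋ a`; an `∈`-minimal element of the set `{u ∈ t | φ(u)}` is `∈`-minimal among all witnesses.

It thus suffices to derive B_k^P-Separation from Σ_k^P-Separation. Bounded quantifiers bind new
variables, so we prove more: for every B_k^P formula `φ(x₀, …, x_{m-1})` and transitive `t`
there is a set containing exactly those codes of `m`-tuples from `t` that satisfy `φ`. This
property survives Boolean connectives by Δ₀^P-Separation, and `∀ z ∈ xⱼ`, `∀ z ⊆ xⱼ` because
`z` then ranges over a set `t' ⊇ t`. For Σ_k^P formulas the set is cut out by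
"`∀ x⃗ (x⃗ is coded by p → φ(x⃗))`", which is again Σ_k^P: a bounded universal quantifier over a
uniquely determined variable commutes with every quantifier of the prefix.
-/

namespace SetTh

theorem forall_imp_exists_iff_exists_forall {α β : Sort*} [Nonempty β] {P : α → Prop}
    {Q : α → β → Prop} (hP : ∀ x y, P x → P y → x = y) :
    (∀ x, P x → ∃ y, Q x y) ↔ ∃ y, ∀ x, P x → Q x y := by
  refine ⟨fun h => ?_, fun ⟨y, hy⟩ x hx => ⟨y, hy x hx⟩⟩
  by_cases hex : ∃ x, P x
  · obtain ⟨x₀, hx₀⟩ := hex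
    obtain ⟨y, hy⟩ := h x₀ hx₀
    exact ⟨y, fun x hx => hP x₀ x hx₀ hx ▸ hy⟩
  · obtain ⟨y⟩ := ‹Nonempty β›
    exact ⟨y, fun x hx => (hex ⟨x, hx⟩).elim⟩

section FinTuple

variable {α : Type*}

theorem cons_cons_comp_succAbove_one {n : ℕ} (x y : α) (v : Fin n → α) :
    (Fin.cons x (Fin.cons y v) : Fin (n + 2) → α) ∘ Fin.succAbove 1 = Fin.cons x v := by
  funext i
  refine Fin.cases ?_ (fun i => ?_) i <;> simp

theorem cons_cons_comp_swap {n : ℕ} (x y : α) (v : Fin n → α) :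
    (Fin.cons x (Fin.cons y v) : Fin (n + 2) → α) ∘ Equiv.swap 0 1 = Fin.cons y (Fin.cons x v) := by
  funext i
  refine Fin.cases ?_ (fun i => Fin.cases ?_ (fun i => ?_) i) i
  · simp
  · simp
  · have h1 : (i.succ.succ : Fin (n + 2)) ≠ 1 := (Fin.succ_injective _).ne (Fin.succ_ne_zero i)
    simp [Equiv.swap_apply_of_ne_of_ne (Fin.succ_ne_zero _) h1]

theorem cons_append_two {m : ℕ} (x : α) (y : Fin m → α) (w : Fin 2 → α) :
    (Fin.cons x (Fin.append y w) : Fin (m + 1 + 2) → α) = Fin.append (Fin.cons x y) w := by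
  funext i
  refine Fin.cases ?_ (fun i => ?_) i
  · exact (Fin.append_left (Fin.cons x y) w 0).symm
  · refine Fin.addCases (fun l => ?_) (fun r => ?_) i
    · rw [Fin.cons_succ, Fin.append_left,
        show (Fin.castAdd 2 l).succ = Fin.castAdd 2 l.succ from rfl, Fin.append_left, Fin.cons_succ]
    · rw [Fin.cons_succ, Fin.append_right,
        show (Fin.natAdd m r).succ = Fin.natAdd (m + 1) r from Fin.ext (by simp; omega),
        Fin.append_right]

theorem append_fin_zero (x : Fin 0 → α) (w : Fin 2 → α) : (Fin.append x w : Fin (0 + 2) → α) = w :=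
  funext fun i => by simpa using Fin.append_right x w i

end FinTuple

namespace Fml

variable {n : ℕ}

def ballMem (j : Fin n) (φ : Fml (n + 1)) : Fml n := Fml.all (Fml.imp (Fml.mem 0 j.succ) φ)

def bexMem (j : Fin n) (φ : Fml (n + 1)) : Fml n := Fml.not (ballMem j (Fml.not φ))

def transitive (i : Fin n) : Fml n := ballMem i (ballMem 0 (Fml.mem 0 i.succ.succ))

def singleton (iz ia : Fin n) : Fml n := Fml.and (Fml.mem ia iz) (ballMem iz (Fml.eq 0 ia.succ))

def pair (iz ia ib : Fin n) : Fml n :=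
  Fml.and (Fml.and (Fml.mem ia iz) (Fml.mem ib iz))
    (ballMem iz (Fml.or (Fml.eq 0 ia.succ) (Fml.eq 0 ib.succ)))

def opair (ip ia ib : Fin n) : Fml n :=
  Fml.and (ballMem ip (Fml.or (singleton 0 ia.succ) (pair 0 ia.succ ib.succ)))
    (Fml.and (bexMem ip (singleton 0 ia.succ)) (bexMem ip (pair 0 ia.succ ib.succ)))

def opairMem (iX ia ib : Fin n) : Fml n := bexMem iX (opair 0 ia.succ ib.succ)

/-- `x_ix` is the `i`-th component of the tuple `x_ip`; the tails of `x_ip` are sought in `x_is`. -/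
def comp : ℕ → {n : ℕ} → Fin n → Fin n → Fin n → Fml n
  | 0, _, ix, ip, is => bexMem is (opair ip.succ ix.succ 0)
  | i + 1, _, ix, ip, is =>
      bexMem is (Fml.and (bexMem is.succ (opair ip.succ.succ 0 1)) (comp i ix.succ 0 is.succ))

end Fml

namespace IsDelta0P

variable {n : ℕ}

theorem or {φ ψ : Fml n} (h₁ : IsDelta0P n φ) (h₂ : IsDelta0P n ψ) : IsDelta0P n (Fml.or φ ψ) :=
  .not (.and (.not h₁) (.not h₂))

theorem imp {φ ψ : Fml n} (h₁ : IsDelta0P n φ) (h₂ : IsDelta0P n ψ) : IsDelta0P n (Fml.imp φ ψ) :=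
  (h₁.not).or h₂

theorem bexMem (j : Fin n) {φ : Fml (n + 1)} (h : IsDelta0P (n + 1) φ) :
    IsDelta0P n (Fml.bexMem j φ) :=
  .not (.allMem j h.not)

theorem subeq (i j : Fin n) : IsDelta0P n (Fml.subeq i j) := .allMem i (.mem 0 j.succ)

theorem transitive (i : Fin n) : IsDelta0P n (Fml.transitive i) :=
  .allMem i (.allMem 0 (.mem 0 i.succ.succ))

theorem opair (ip ia ib : Fin n) : IsDelta0P n (Fml.opair ip ia ib) :=
  have hsing : IsDelta0P (n + 1) (Fml.singleton 0 ia.succ) := .and (.mem _ _) (.allMem _ (.eq _ _))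
  have hpair : IsDelta0P (n + 1) (Fml.pair 0 ia.succ ib.succ) :=
    .and (.and (.mem _ _) (.mem _ _)) (.allMem _ ((IsDelta0P.eq _ _).or (.eq _ _)))
  .and (.allMem _ (hsing.or hpair)) (.and (.bexMem _ hsing) (.bexMem _ hpair))

theorem opairMem (iX ia ib : Fin n) : IsDelta0P n (Fml.opairMem iX ia ib) :=
  .bexMem _ (.opair _ _ _)

theorem comp : ∀ (i : ℕ) {n : ℕ} (ix ip is : Fin n), IsDelta0P n (Fml.comp i ix ip is)
  | 0, _, _, _, _ => .bexMem _ (.opair _ _ _)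
  | i + 1, _, _, _, _ => .bexMem _ (.and (.bexMem _ (.opair _ _ _)) (comp i _ _ _))

end IsDelta0P

section Realize

variable {M : Type*} {E : M → M → Prop} {n : ℕ}

@[simp] theorem realize_mem (i j : Fin n) (v : Fin n → M) :
    Realize E n (Fml.mem i j) v ↔ E (v i) (v j) := Iff.rfl

@[simp] theorem realize_eq (i j : Fin n) (v : Fin n → M) :
    Realize E n (Fml.eq i j) v ↔ v i = v j := Iff.rfl

@[simp] theorem realize_not (φ : Fml n) (v : Fin n → M) :
    Realize E n (Fml.not φ) v ↔ ¬ Realize E n φ v := Iff.rfl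

@[simp] theorem realize_and (φ ψ : Fml n) (v : Fin n → M) :
    Realize E n (Fml.and φ ψ) v ↔ Realize E n φ v ∧ Realize E n ψ v := Iff.rfl

@[simp] theorem realize_all (φ : Fml (n + 1)) (v : Fin n → M) :
    Realize E n (Fml.all φ) v ↔ ∀ x, Realize E (n + 1) φ (Fin.cons x v) := Iff.rfl

@[simp] theorem realize_or (φ ψ : Fml n) (v : Fin n → M) :
    Realize E n (Fml.or φ ψ) v ↔ Realize E n φ v ∨ Realize E n ψ v := by
  simp [Fml.or, or_iff_not_and_not]

@[simp] theorem realize_imp (φ ψ : Fml n) (v : Fin n → M) :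
    Realize E n (Fml.imp φ ψ) v ↔ (Realize E n φ v → Realize E n ψ v) := by
  simp [Fml.imp, imp_iff_not_or]

@[simp] theorem realize_ex (φ : Fml (n + 1)) (v : Fin n → M) :
    Realize E n (Fml.ex φ) v ↔ ∃ x, Realize E (n + 1) φ (Fin.cons x v) := by
  simp [Fml.ex]

@[simp] theorem realize_subeq (i j : Fin n) (v : Fin n → M) :
    Realize E n (Fml.subeq i j) v ↔ ∀ x, E x (v i) → E x (v j) := by
  simp [Fml.subeq]

@[simp] theorem realize_ballMem (j : Fin n) (φ : Fml (n + 1)) (v : Fin n → M) :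
    Realize E n (Fml.ballMem j φ) v ↔ ∀ x, E x (v j) → Realize E (n + 1) φ (Fin.cons x v) := by
  simp [Fml.ballMem]

@[simp] theorem realize_bexMem (j : Fin n) (φ : Fml (n + 1)) (v : Fin n → M) :
    Realize E n (Fml.bexMem j φ) v ↔ ∃ x, E x (v j) ∧ Realize E (n + 1) φ (Fin.cons x v) := by
  simp [Fml.bexMem]

@[simp] theorem realize_transitive (i : Fin n) (v : Fin n → M) :
    Realize E n (Fml.transitive i) v ↔ IsTrans E (v i) := by
  simp [Fml.transitive, IsTrans]

@[simp] theorem realize_singleton (iz ia : Fin n) (v : Fin n → M) :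
    Realize E n (Fml.singleton iz ia) v ↔ ∀ w, E w (v iz) ↔ w = v ia := by
  simp only [Fml.singleton, realize_and, realize_mem, realize_ballMem, realize_eq, Fin.cons_zero,
    Fin.cons_succ]
  exact ⟨fun ⟨h₁, h₂⟩ w => ⟨h₂ w, fun hw => hw ▸ h₁⟩, fun h => ⟨(h _).2 rfl, fun w => (h w).1⟩⟩

@[simp] theorem realize_pair (iz ia ib : Fin n) (v : Fin n → M) :
    Realize E n (Fml.pair iz ia ib) v ↔ ∀ w, E w (v iz) ↔ w = v ia ∨ w = v ib := by
  simp only [Fml.pair, realize_and, realize_mem, realize_ballMem, realize_or, realize_eq,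
    Fin.cons_zero, Fin.cons_succ]
  refine ⟨fun ⟨⟨ha, hb⟩, h⟩ w => ⟨h w, ?_⟩, fun h => ⟨⟨(h _).2 (.inl rfl), (h _).2 (.inr rfl)⟩,
    fun w => (h w).1⟩⟩
  rintro (rfl | rfl)
  exacts [ha, hb]

theorem realize_rename {m n : ℕ} (f : Fin m → Fin n) (φ : Fml m) (v : Fin n → M) :
    Realize E n (rename m n f φ) v ↔ Realize E m φ (v ∘ f) := by
  induction φ generalizing n with
  | mem i j => exact Iff.rfl
  | eq i j => exact Iff.rfl
  | not φ ih => simp [rename, ih]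
  | and φ ψ ih₁ ih₂ => simp [rename, ih₁, ih₂]
  | all φ ih =>
    simp only [rename, realize_all, ih]
    refine forall_congr' fun x => iff_of_eq (congrArg _ (funext fun k => ?_))
    refine Fin.cases ?_ (fun i => ?_) k <;> simp

end Realize

theorem IsDelta0P.rename {m : ℕ} {φ : Fml m} (h : IsDelta0P m φ) :
    ∀ {n : ℕ} (f : Fin m → Fin n), IsDelta0P n (SetTh.rename m n f φ) := by
  induction h with
  | mem i j => exact fun _ => .mem _ _
  | eq i j => exact fun _ => .eq _ _
  | not _ ih => exact fun f => .not (ih f)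
  | and _ _ ih₁ ih₂ => exact fun f => .and (ih₁ f) (ih₂ f)
  | allMem j _ ih => exact fun f => .allMem (f j) (ih _)
  | allSub j _ ih => exact fun f => .allSub (f j) (ih _)

theorem IsLvl.rename : ∀ {k : ℕ} {b : Bool} {m : ℕ} {φ : Fml m}, IsLvl IsDelta0P b k m φ →
    ∀ {n : ℕ} (f : Fin m → Fin n), IsLvl IsDelta0P b k n (SetTh.rename m n f φ)
  | 0, true, _, _, h, _, f => IsDelta0P.rename h f
  | 0, false, _, _, h, _, f => IsDelta0P.rename h f
  | _ + 1, true, _, _, ⟨_, rfl, h⟩, _, _ => ⟨_, rfl, IsLvl.rename h _⟩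
  | _ + 1, false, _, _, ⟨_, rfl, h⟩, _, _ => ⟨_, rfl, IsLvl.rename h _⟩

section Pairs

variable {M : Type*} {E : M → M → Prop} {p a b : M}

theorem IsOPair.left_mem (h : IsOPair E p a b) {z : M} (hz : E z p) : E a z := by
  rcases (h z).1 hz with hz | hz
  exacts [(hz a).2 rfl, (hz a).2 (.inl rfl)]

theorem IsOPair.eq_or_eq_of_mem (h : IsOPair E p a b) {z w : M} (hz : E z p) (hw : E w z) :
    w = a ∨ w = b := by
  rcases (h z).1 hz with hz | hz
  exacts [.inl ((hz w).1 hw), (hz w).1 hw]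

theorem IsOPair.exists_singleton_mem (hpair : PairAx E) (h : IsOPair E p a b) :
    ∃ z, E z p ∧ ∀ w, E w z ↔ w = a := by
  obtain ⟨z, hz⟩ := hpair a a
  have hz' : ∀ w, E w z ↔ w = a := fun w => by rw [hz, or_self]
  exact ⟨z, (h z).2 (.inl hz'), hz'⟩

theorem IsOPair.exists_mem_mem (hpair : PairAx E) (h : IsOPair E p a b) :
    ∃ z, E z p ∧ E a z ∧ E b z := by
  obtain ⟨z, hz⟩ := hpair a b
  exact ⟨z, (h z).2 (.inr hz), (hz a).2 (.inl rfl), (hz b).2 (.inr rfl)⟩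

theorem IsOPair.inj (hpair : PairAx E) {a' b' : M} (h : IsOPair E p a b)
    (h' : IsOPair E p a' b') : a = a' ∧ b = b' := by
  obtain ⟨z, hz, hza⟩ := h.exists_singleton_mem hpair
  obtain rfl : a' = a := (hza a').1 (h'.left_mem hz)
  obtain ⟨z, hz, -, hbz⟩ := h'.exists_mem_mem hpair
  obtain ⟨z', hz', -, hbz'⟩ := h.exists_mem_mem hpair
  have := h.eq_or_eq_of_mem hz hbz
  have := h'.eq_or_eq_of_mem hz' hbz'
  grind

theorem IsOPair.unique (hext : Extensionality E) {q : M} (h : IsOPair E p a b)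
    (h' : IsOPair E q a b) : p = q :=
  hext p q fun z => (h z).trans (h' z).symm

theorem IsOPair.mem_iff_exists (hext : Extensionality E) (h : IsOPair E p a b) {X : M} :
    E p X ↔ ∃ q, E q X ∧ IsOPair E q a b :=
  ⟨fun hp => ⟨p, hp, h⟩, fun ⟨_, hq, hq'⟩ => hq'.unique hext h ▸ hq⟩

theorem IsOPair.mem_of_isTrans (hpair : PairAx E) {s : M} (hs : IsTrans E s) (hp : E p s)
    (h : IsOPair E p a b) : E a s ∧ E b s := by
  obtain ⟨z, hz, ha, hb⟩ := h.exists_mem_mem hpair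
  exact ⟨hs z (hs p hp z hz) a ha, hs z (hs p hp z hz) b hb⟩

theorem exists_isOPair (hext : Extensionality E) (hpair : PairAx E) (a b : M) :
    ∃ p, IsOPair E p a b := by
  obtain ⟨sa, hsa⟩ := hpair a a
  obtain ⟨sab, hsab⟩ := hpair a b
  obtain ⟨p, hp⟩ := hpair sa sab
  simp only [or_self] at hsa
  refine ⟨p, fun z => ⟨fun hz => ?_, fun hz => (hp z).2 ?_⟩⟩
  · rcases (hp z).1 hz with rfl | rfl
    exacts [.inl hsa, .inr hsab]
  · rcases hz with hz | hz
    exacts [.inl (hext z sa fun w => (hz w).trans (hsa w).symm),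
      .inr (hext z sab fun w => (hz w).trans (hsab w).symm)]

variable {n : ℕ}

theorem realize_opair (hext : Extensionality E) (hpair : PairAx E) (ip ia ib : Fin n)
    (v : Fin n → M) : Realize E n (Fml.opair ip ia ib) v ↔ IsOPair E (v ip) (v ia) (v ib) := by
  simp only [Fml.opair, realize_and, realize_ballMem, realize_bexMem, realize_or, realize_singleton,
    realize_pair, Fin.cons_zero, Fin.cons_succ]
  refine ⟨fun ⟨hall, ⟨z₁, hz₁, h₁⟩, ⟨z₂, hz₂, h₂⟩⟩ z => ⟨hall z, ?_⟩, fun h => ?_⟩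
  · rintro (h | h)
    · rwa [hext z z₁ fun w => (h w).trans (h₁ w).symm]
    · rwa [hext z z₂ fun w => (h w).trans (h₂ w).symm]
  · obtain ⟨z₁, hz₁, h₁⟩ := h.exists_singleton_mem hpair
    obtain ⟨z₂, h₂⟩ := hpair (v ia) (v ib)
    exact ⟨fun z hz => (h z).1 hz, ⟨z₁, hz₁, h₁⟩, ⟨z₂, (h z₂).2 (.inr h₂), h₂⟩⟩

theorem realize_opairMem (hext : Extensionality E) (hpair : PairAx E) (iX ia ib : Fin n)
    (v : Fin n → M) : Realize E n (Fml.opairMem iX ia ib) v ↔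
      ∃ q, E q (v iX) ∧ IsOPair E q (v ia) (v ib) := by
  simp [Fml.opairMem, realize_opair hext hpair]

end Pairs

section KPP

variable {M : Type*} {E : M → M → Prop}

theorem KPP.extensionality (hM : KPP E) : Extensionality E := hM.1
theorem KPP.pairAx (hM : KPP E) : PairAx E := hM.2.1
theorem KPP.unionAx (hM : KPP E) : UnionAx E := hM.2.2.1
theorem KPP.powerAx (hM : KPP E) : PowerAx E := hM.2.2.2.1
theorem KPP.infinityAx (hM : KPP E) : InfinityAx E := hM.2.2.2.2.1
theorem KPP.sepDelta0P (hM : KPP E) : SepScheme E IsDelta0P := hM.2.2.2.2.2.1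
theorem KPP.collDelta0P (hM : KPP E) : CollScheme E IsDelta0P := hM.2.2.2.2.2.2.1
theorem KPP.fndPiP1 (hM : KPP E) : FndScheme E (IsPiP 1) := hM.2.2.2.2.2.2.2

theorem exists_empty (hM : KPP E) : ∃ e : M, ∀ z, ¬ E z e :=
  let ⟨_, ⟨e, _, he⟩, _⟩ := hM.infinityAx
  ⟨e, he⟩

theorem exists_union (hM : KPP E) (a b : M) : ∃ c, ∀ z, E z c ↔ E z a ∨ E z b := by
  obtain ⟨d, hd⟩ := hM.pairAx a b
  obtain ⟨c, hc⟩ := hM.unionAx d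
  refine ⟨c, fun z => (hc z).trans ⟨?_, ?_⟩⟩
  · rintro ⟨w, hw, hz⟩
    rcases (hd w).1 hw with rfl | rfl
    exacts [.inl hz, .inr hz]
  · rintro (hz | hz)
    exacts [⟨a, (hd a).2 (.inl rfl), hz⟩, ⟨b, (hd b).2 (.inr rfl), hz⟩]

theorem exists_minimal (hM : KPP E) {A : M} (hA : ∃ x, E x A) :
    ∃ m, E m A ∧ ∀ u, E u m → ¬ E u A := by
  -- `u ∈ A`, behind a vacuous universal quantifier, is a Π₁^P formula
  have hre : ∀ u, Realize E 2 (Fml.all (Fml.mem 1 2)) (Fin.cons u ![A]) ↔ E u A :=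
    fun u => ⟨fun h => h u, fun h _ => h⟩
  obtain ⟨m, hm, hmin⟩ := hM.fndPiP1 1 _ ⟨_, rfl, .mem 1 2⟩ ![A]
    (let ⟨x, hx⟩ := hA; ⟨x, (hre x).2 hx⟩)
  exact ⟨m, (hre m).1 hm, fun u hu huA => hmin u hu ((hre u).2 huA)⟩

/- Π₁^P-foundation gives a minimal `x₀` without a transitive superset; by Δ₀^P-collection its
elements have transitive supersets in some set `y`, and `x₀ ∪ ⋃ {w ∈ y | w transitive}` is
transitive. -/
theorem exists_isTrans_superset (hM : KPP E) (x : M) : ∃ t, IsTrans E t ∧ ∀ z, E z x → E z t := by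
  by_contra hx
  have hχ : ∀ y v, Realize E 1 (Fml.all (Fml.not (Fml.and (Fml.transitive 0) (Fml.subeq 1 0))))
      (Fin.cons y v) ↔ ¬ ∃ t, IsTrans E t ∧ ∀ z, E z y → E z t := fun y v => by simp
  obtain ⟨x₀, hx₀, hmin⟩ := hM.fndPiP1 0 _ ⟨_, rfl, .not (.and (.transitive 0) (.subeq 1 0))⟩
    Fin.elim0 ⟨x, (hχ x _).2 hx⟩
  rw [hχ] at hx₀
  have hsup : ∀ u, E u x₀ → ∃ w, IsTrans E w ∧ ∀ z, E z u → E z w :=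
    fun u hu => not_not.1 fun h => hmin u hu ((hχ u _).2 h)
  obtain ⟨y, hy⟩ := hM.collDelta0P 0 (Fml.and (Fml.transitive 1) (Fml.subeq 0 1))
    (.and (.transitive 1) (.subeq 0 1)) Fin.elim0 x₀ (by simpa using hsup)
  obtain ⟨Y, hY⟩ := hM.sepDelta0P 0 (Fml.transitive 0) (.transitive 0) Fin.elim0 y
  obtain ⟨U, hU⟩ := hM.unionAx Y
  obtain ⟨T, hT⟩ := exists_union hM U x₀
  simp only [realize_and, realize_transitive, realize_subeq, Fin.cons_zero, Fin.cons_one] at hy hY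
  refine hx₀ ⟨T, fun z hz u hu => (hT u).2 (.inl ?_), fun z hz => (hT z).2 (.inr hz)⟩
  rcases (hT z).1 hz with hz | hz
  · obtain ⟨w, hwY, hzw⟩ := (hU z).1 hz
    exact (hU u).2 ⟨w, hwY, ((hY w).1 hwY).2 z hzw u hu⟩
  · obtain ⟨w, hwy, hw, hzw⟩ := hy z hz
    exact (hU u).2 ⟨w, (hY w).2 ⟨hwy, hw⟩, hzw u hu⟩

theorem exists_isTrans_mem (hM : KPP E) (x : M) : ∃ t, IsTrans E t ∧ E x t := by
  obtain ⟨sx, hsx⟩ := hM.pairAx x x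
  obtain ⟨t, ht, hsxt⟩ := exists_isTrans_superset hM sx
  exact ⟨t, ht, hsxt x ((hsx x).2 (.inl rfl))⟩

end KPP

section Codes

variable {M : Type*} {E : M → M → Prop}

/-- `p` codes the tuple `x` as `⟨x 0, ⟨x 1, … ⟨x (m - 1), ∅⟩ …⟩⟩`. -/
def Tup (E : M → M → Prop) : (m : ℕ) → M → (Fin m → M) → Prop
  | 0, p, _ => ∀ z, ¬ E z p
  | m + 1, p, x => ∃ q, IsOPair E p (x 0) q ∧ Tup E m q (Fin.tail x)

theorem exists_tup (hM : KPP E) : ∀ {m : ℕ} (x : Fin m → M), ∃ p, Tup E m p x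
  | 0, _ => exists_empty hM
  | _ + 1, x => by
    obtain ⟨q, hq⟩ := exists_tup hM (Fin.tail x)
    obtain ⟨p, hp⟩ := exists_isOPair hM.extensionality hM.pairAx (x 0) q
    exact ⟨p, q, hp, hq⟩

theorem Tup.mem_of_isTrans (hpair : PairAx E) {s : M} (hs : IsTrans E s) :
    ∀ {m : ℕ} {p : M} {x : Fin m → M}, Tup E m p x → E p s → ∀ i, E (x i) s
  | 0, _, _, _, _, i => i.elim0
  | _ + 1, _, _, ⟨_, hq, hx⟩, hp, i => by
    obtain ⟨h0, hq'⟩ := hq.mem_of_isTrans hpair hs hp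
    exact Fin.cases h0 (Tup.mem_of_isTrans hpair hs hx hq') i

theorem exists_isTrans_forall_mem (hM : KPP E) {m : ℕ} (x : Fin m → M) :
    ∃ t, IsTrans E t ∧ ∀ i, E (x i) t := by
  obtain ⟨p, hp⟩ := exists_tup hM x
  obtain ⟨t, ht, hpt⟩ := exists_isTrans_mem hM p
  exact ⟨t, ht, hp.mem_of_isTrans hM.pairAx ht hpt⟩

theorem exists_isTrans_forall_tup_mem (hM : KPP E) (m : ℕ) (t : M) :
    ∃ s, IsTrans E s ∧ ∀ (x : Fin m → M) p, (∀ i, E (x i) t) → Tup E m p x → E p s := by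
  induction m with
  | zero =>
    obtain ⟨e, he⟩ := exists_empty hM
    obtain ⟨s, hs, hes⟩ := exists_isTrans_mem hM e
    exact ⟨s, hs, fun _ p _ hp => hM.extensionality p e (fun z => iff_of_false (hp z) (he z)) ▸ hes⟩
  | succ m ih =>
    -- a code `⟨x 0, q⟩` with `x 0 ∈ t` and `q ∈ s₀` lies in `𝒫 (𝒫 (t ∪ s₀))`
    obtain ⟨s₀, -, hs₀⟩ := ih
    obtain ⟨c, hc⟩ := exists_union hM t s₀
    obtain ⟨P₁, hP₁⟩ := hM.powerAx c
    obtain ⟨P₂, hP₂⟩ := hM.powerAx P₁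
    obtain ⟨s, hs, hP₂s⟩ := exists_isTrans_mem hM P₂
    refine ⟨s, hs, fun x p hx ⟨q, hpq, hq⟩ =>
      hs P₂ hP₂s p ((hP₂ p).2 fun z hz => (hP₁ z).2 fun w hw => ?_)⟩
    rcases hpq.eq_or_eq_of_mem hz hw with rfl | rfl
    exacts [(hc _).2 (.inl (hx 0)), (hc _).2 (.inr (hs₀ _ _ (fun i => hx i.succ) hq))]

def IsComp (E : M → M → Prop) : ℕ → M → M → Prop
  | 0, p, x => ∃ q, IsOPair E p x q
  | i + 1, p, x => ∃ w q, IsOPair E p w q ∧ IsComp E i q x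

theorem IsComp.unique (hpair : PairAx E) :
    ∀ {i : ℕ} {p x y : M}, IsComp E i p x → IsComp E i p y → x = y
  | 0, _, _, _, ⟨_, h⟩, ⟨_, h'⟩ => (h.inj hpair h').1
  | _ + 1, _, _, _, ⟨_, _, h, hc⟩, ⟨_, _, h', hc'⟩ => by
    obtain ⟨-, rfl⟩ := h.inj hpair h'
    exact IsComp.unique hpair hc hc'

theorem IsComp.mem_of_isTrans (hpair : PairAx E) {s : M} (hs : IsTrans E s) :
    ∀ {i : ℕ} {p x : M}, IsComp E i p x → E p s → E x s
  | 0, _, _, ⟨_, h⟩, hp => (h.mem_of_isTrans hpair hs hp).1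
  | _ + 1, _, _, ⟨_, _, h, hc⟩, hp =>
    IsComp.mem_of_isTrans hpair hs hc (h.mem_of_isTrans hpair hs hp).2

theorem Tup.isComp_iff (hpair : PairAx E) :
    ∀ {m : ℕ} {p : M} {x : Fin m → M}, Tup E m p x → ∀ (l : Fin m) (y : M), IsComp E l p y ↔ y = x l
  | 0, _, _, _, l, _ => l.elim0
  | _ + 1, _, x, ⟨q, hq, hx⟩, l, y => by
    refine Fin.cases ⟨fun ⟨_, h⟩ => (h.inj hpair hq).1, fun h => ⟨q, h ▸ hq⟩⟩ (fun l => ?_) l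
    rw [Fin.val_succ]
    refine ⟨fun ⟨_, _, h, hc⟩ => ?_, fun h => ⟨x 0, q, hq, (Tup.isComp_iff hpair hx l y).2 h⟩⟩
    obtain ⟨-, rfl⟩ := h.inj hpair hq
    exact (Tup.isComp_iff hpair hx l y).1 hc

theorem IsComp.of_realize_comp (hext : Extensionality E) (hpair : PairAx E) :
    ∀ (i : ℕ) {n : ℕ} (ix ip is : Fin n) (v : Fin n → M),
      Realize E n (Fml.comp i ix ip is) v → IsComp E i (v ip) (v ix)
  | 0, _, _, _, _, _, h => by
    simp only [Fml.comp, realize_bexMem, realize_opair hext hpair, Fin.cons_succ] at h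
    obtain ⟨q, -, hq⟩ := h
    exact ⟨q, hq⟩
  | i + 1, _, _, _, _, _, h => by
    simp only [Fml.comp, realize_bexMem, realize_and, realize_opair hext hpair, Fin.cons_zero,
      Fin.cons_succ] at h
    obtain ⟨q, -, ⟨w, -, hw⟩, hc⟩ := h
    exact ⟨w, q, hw, by simpa using IsComp.of_realize_comp hext hpair i _ _ _ _ hc⟩

theorem realize_comp_of_isComp (hext : Extensionality E) (hpair : PairAx E) :
    ∀ (i : ℕ) {n : ℕ} (ix ip is : Fin n) (v : Fin n → M), IsTrans E (v is) → E (v ip) (v is) →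
      IsComp E i (v ip) (v ix) → Realize E n (Fml.comp i ix ip is) v
  | 0, _, _, _, _, _, hs, hp, ⟨q, hq⟩ => by
    simp only [Fml.comp, realize_bexMem, realize_opair hext hpair, Fin.cons_succ, Fin.cons_zero]
    exact ⟨q, (hq.mem_of_isTrans hpair hs hp).2, hq⟩
  | i + 1, _, _, _, _, v, hs, hp, ⟨w, q, hq, hc⟩ => by
    have hwq := hq.mem_of_isTrans hpair hs hp
    simp only [Fml.comp, realize_bexMem, realize_and, realize_opair hext hpair, Fin.cons_zero,
      Fin.cons_succ]
    exact ⟨q, hwq.2, ⟨w, hwq.1, hq⟩, realize_comp_of_isComp hext hpair i _ _ _ (Fin.cons q v)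
      (by simpa using hs) (by simpa using hwq.2) (by simpa using hc)⟩

end Codes

section Absorption

variable {M : Type*} {E : M → M → Prop} [Nonempty M]

theorem exists_isLvl_iff_forall_guarded (k : ℕ) :
    ∀ (b : Bool) {n : ℕ} (ψ γ : Fml (n + 1)) (j : Fin n), IsLvl IsDelta0P b k (n + 1) ψ →
      IsDelta0P (n + 1) γ →
      (∀ (v : Fin n → M) x y, Realize E (n + 1) γ (Fin.cons x v) →
        Realize E (n + 1) γ (Fin.cons y v) → x = y) →
      ∃ θ : Fml n, IsLvl IsDelta0P b k n θ ∧ ∀ v : Fin n → M, Realize E n θ v ↔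
        ∀ x, E x (v j) → Realize E (n + 1) γ (Fin.cons x v) →
          Realize E (n + 1) ψ (Fin.cons x v) := by
  induction k with
  | zero =>
    intro b n ψ γ j hψ hγ _
    refine ⟨Fml.ballMem j (Fml.imp γ ψ), ?_, fun v => by simp⟩
    cases b <;> exact .allMem j (.imp hγ hψ)
  | succ k ih =>
    intro b n ψ γ j hψ hγ hγu
    -- move the guarded variable `x` below the leading quantified variable `y` of `χ`
    have hpush : ∀ χ : Fml (n + 2), IsLvl IsDelta0P (!b) k (n + 2) χ →
        ∃ θ : Fml (n + 1), IsLvl IsDelta0P (!b) k (n + 1) θ ∧ ∀ y (v : Fin n → M),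
          Realize E (n + 1) θ (Fin.cons y v) ↔ ∀ x, E x (v j) → Realize E (n + 1) γ (Fin.cons x v) →
            Realize E (n + 2) χ (Fin.cons y (Fin.cons x v)) := by
      intro χ hχ
      obtain ⟨θ, hθ, hθiff⟩ := ih (!b) (rename _ _ (Equiv.swap 0 1) χ)
        (rename _ _ (Fin.succAbove 1) γ) j.succ (hχ.rename _) (hγ.rename _) fun v x y hx hy => by
          rw [← Fin.cons_self_tail v, realize_rename, cons_cons_comp_succAbove_one] at hx hy
          exact hγu _ x y hx hy
      refine ⟨θ, hθ, fun y v => ?_⟩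
      simp only [hθiff, realize_rename, Fin.cons_succ, cons_cons_comp_swap,
        cons_cons_comp_succAbove_one]
    cases b with
    | true =>
      obtain ⟨χ, rfl, hχ⟩ := hψ
      obtain ⟨θ, hθ, hθiff⟩ := hpush χ hχ
      refine ⟨Fml.ex θ, ⟨θ, rfl, hθ⟩, fun v => ?_⟩
      simp only [realize_ex, hθiff]
      simpa only [and_imp] using (forall_imp_exists_iff_exists_forall
        (P := fun x => E x (v j) ∧ Realize E (n + 1) γ (Fin.cons x v))
        (Q := fun x y => Realize E (n + 2) χ (Fin.cons y (Fin.cons x v)))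
        fun x y hx hy => hγu v x y hx.2 hy.2).symm
    | false =>
      obtain ⟨χ, rfl, hχ⟩ := hψ
      obtain ⟨θ, hθ, hθiff⟩ := hpush χ hχ
      refine ⟨Fml.all θ, ⟨θ, rfl, hθ⟩, fun v => ?_⟩
      simp only [realize_all, hθiff]
      exact ⟨fun h x hx hγx y => h y x hx hγx, fun h y x hx hγx => h x hx hγx y⟩

theorem exists_isLvl_iff_forall_isComp (hext : Extensionality E) (hpair : PairAx E) {b : Bool}
    {j : ℕ} : ∀ (m i₀ : ℕ) (ψ : Fml (m + 2)), IsLvl IsDelta0P b j (m + 2) ψ →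
      ∃ θ : Fml 2, IsLvl IsDelta0P b j 2 θ ∧ ∀ w : Fin 2 → M, IsTrans E (w 1) → E (w 0) (w 1) →
        (Realize E 2 θ w ↔ ∀ x : Fin m → M, (∀ l : Fin m, IsComp E (i₀ + l) (w 0) (x l)) →
          Realize E (m + 2) ψ (Fin.append x w)) := by
  intro m
  induction m with
  | zero =>
    intro i₀ ψ hψ
    exact ⟨ψ, hψ, fun w _ _ => by simp [append_fin_zero]⟩
  | succ m ih =>
    intro i₀ ψ hψ
    obtain ⟨θ₁, hθ₁, hθ₁iff⟩ := exists_isLvl_iff_forall_guarded (E := E) j b ψ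
      (Fml.comp i₀ 0 (Fin.natAdd m 0).succ (Fin.natAdd m 1).succ) (Fin.natAdd m 1) hψ
      (.comp _ _ _ _) fun v x y hx hy => by
        have hx' := IsComp.of_realize_comp hext hpair _ _ _ _ _ hx
        have hy' := IsComp.of_realize_comp hext hpair _ _ _ _ _ hy
        simp only [Fin.cons_succ, Fin.cons_zero] at hx' hy'
        exact hx'.unique hpair hy'
    obtain ⟨θ, hθ, hθiff⟩ := ih (i₀ + 1) θ₁ hθ₁
    refine ⟨θ, hθ, fun w hs hp => (hθiff w hs hp).trans ?_⟩
    have hguard : ∀ x : Fin (m + 1) → M, Realize E (m + 2 + 1)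
        (Fml.comp i₀ 0 (Fin.natAdd m 0).succ (Fin.natAdd m 1).succ)
        (Fin.append x w : Fin (m + 1 + 2) → M) ↔
          IsComp E i₀ (w 0) (x 0) := fun x => by
      rw [← Fin.cons_self_tail x, ← cons_append_two]
      exact ⟨fun h => by simpa using IsComp.of_realize_comp hext hpair _ _ _ _ _ h,
        fun h => realize_comp_of_isComp hext hpair _ _ _ _ _ (by simpa using hs)
          (by simpa using hp) (by simpa using h)⟩
    have hidx : ∀ l : Fin m, i₀ + 1 + (l : ℕ) = i₀ + (l.succ : ℕ) := fun l => by
      rw [Fin.val_succ]; omega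
    simp only [hθ₁iff, Fin.append_right, cons_append_two, hguard, Fin.cons_zero]
    refine ⟨fun H x hx => ?_, fun H y hy x _ hx => H (Fin.cons x y) (Fin.cases (by simpa using hx)
      fun l => by simpa [hidx] using hy l)⟩
    have := H (Fin.tail x) (fun l => hidx l ▸ hx l.succ) (x 0)
      ((hx 0).mem_of_isTrans hpair hs hp) (hx 0)
    rwa [Fin.cons_self_tail] at this

end Absorption

section Traces

variable {M : Type*} {E : M → M → Prop}

/-- The trace `T` of `φ` on `t` is only constrained on codes of tuples from `t`. -/
def HasTrace (E : M → M → Prop) {m : ℕ} (φ : Fml m) : Prop :=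
  ∀ t, IsTrans E t → ∃ T, ∀ (x : Fin m → M) p, (∀ i, E (x i) t) → Tup E m p x →
    (E p T ↔ Realize E m φ x)

theorem HasTrace.of_isLvl (hM : KPP E) {b : Bool} {j : ℕ}
    (hsep : SepScheme E (IsLvl IsDelta0P b j)) {m : ℕ} {φ : Fml m}
    (hφ : IsLvl IsDelta0P b j m φ) : HasTrace E φ := by
  intro t ht
  have : Nonempty M := ⟨t⟩
  obtain ⟨s, hs, hcode⟩ := exists_isTrans_forall_tup_mem hM m t
  obtain ⟨θ, hθ, hθiff⟩ := exists_isLvl_iff_forall_isComp hM.extensionality hM.pairAx m 0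
    (rename m (m + 2) (Fin.castAdd 2) φ) (hφ.rename _)
  obtain ⟨T, hT⟩ := hsep 1 θ hθ ![s] s
  refine ⟨T, fun x p hx hp => ?_⟩
  have hps := hcode x p hx hp
  have happ : ∀ x' : Fin m → M, Fin.append x' ![p, s] ∘ Fin.castAdd 2 = x' :=
    fun x' => funext (Fin.append_left x' _)
  rw [hT, and_iff_right hps, hθiff (Fin.cons p ![s]) hs hps]
  simp only [Fin.cons_zero, zero_add, hp.isComp_iff hM.pairAx, realize_rename]
  exact ⟨fun h => by simpa [happ] using h x (fun _ => rfl), fun h x' hx' => by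
    rw [funext hx']; simpa [happ] using h⟩

theorem HasTrace.of_isDelta0P (hM : KPP E) {m : ℕ} {φ : Fml m} (hφ : IsDelta0P m φ) :
    HasTrace E φ :=
  .of_isLvl hM (b := true) (j := 0) hM.sepDelta0P hφ

theorem HasTrace.not (hM : KPP E) {m : ℕ} {φ : Fml m} (h : HasTrace E φ) :
    HasTrace E (Fml.not φ) := by
  intro t ht
  obtain ⟨T, hT⟩ := h t ht
  obtain ⟨s, -, hs⟩ := exists_isTrans_forall_tup_mem hM m t
  obtain ⟨T', hT'⟩ := hM.sepDelta0P 1 (Fml.not (Fml.mem 0 1)) (.not (.mem 0 1)) ![T] s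
  exact ⟨T', fun x p hx hp => by
    rw [hT', and_iff_right (hs x p hx hp), realize_not, realize_not, ← hT x p hx hp]; rfl⟩

theorem HasTrace.and (hM : KPP E) {m : ℕ} {φ ψ : Fml m} (h₁ : HasTrace E φ)
    (h₂ : HasTrace E ψ) : HasTrace E (Fml.and φ ψ) := by
  intro t ht
  obtain ⟨T₁, hT₁⟩ := h₁ t ht
  obtain ⟨T₂, hT₂⟩ := h₂ t ht
  obtain ⟨T, hT⟩ := hM.sepDelta0P 1 (Fml.mem 0 1) (.mem 0 1) ![T₂] T₁
  exact ⟨T, fun x p hx hp => by rw [hT, realize_and, ← hT₁ x p hx hp, ← hT₂ x p hx hp]; rfl⟩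

theorem HasTrace.imp (hM : KPP E) {m : ℕ} {φ ψ : Fml m} (h₁ : HasTrace E φ)
    (h₂ : HasTrace E ψ) : HasTrace E (Fml.imp φ ψ) :=
  (((h₁.not hM).not hM).and hM (h₂.not hM)).not hM

theorem HasTrace.of_forall_mem (hM : KPP E) {m : ℕ} {φ : Fml m} {ψ : Fml (m + 1)}
    (hψ : HasTrace E ψ)
    (hrange : ∀ t, IsTrans E t → ∃ t', IsTrans E t' ∧ (∀ z, E z t → E z t') ∧
      ∀ x : Fin m → M, (∀ i, E (x i) t) →
        (Realize E m φ x ↔ ∀ z, E z t' → Realize E (m + 1) ψ (Fin.cons z x))) :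
    HasTrace E φ := by
  intro t ht
  obtain ⟨t', ht', htt', hφψ⟩ := hrange t ht
  obtain ⟨T₀, hT₀⟩ := hψ t' ht'
  obtain ⟨s, -, hs⟩ := exists_isTrans_forall_tup_mem hM m t
  obtain ⟨T, hT⟩ := hM.sepDelta0P 2 (Fml.ballMem 1 (Fml.opairMem 3 0 1))
    (.allMem 1 (.opairMem 3 0 1)) ![t', T₀] s
  refine ⟨T, fun x p hx hp => ?_⟩
  rw [hT, and_iff_right (hs x p hx hp), hφψ x hx, realize_ballMem]
  refine forall₂_congr fun z hz => ?_
  obtain ⟨q, hq⟩ := exists_isOPair hM.extensionality hM.pairAx z p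
  rw [realize_opairMem hM.extensionality hM.pairAx, ← hT₀ (Fin.cons z x) q
    (Fin.cases hz fun i => htt' _ (hx i)) ⟨p, hq, hp⟩, hq.mem_iff_exists hM.extensionality]
  rfl

theorem hasTrace_of_isBP (hM : KPP E) {k : ℕ} (hsep : SepScheme E (IsSigmaP k)) {m : ℕ}
    {φ : Fml m} (h : IsBP k m φ) : HasTrace E φ := by
  induction h with
  | ofSigma hφ => exact .of_isLvl hM hsep hφ
  | ofDelta0 hφ => exact .of_isDelta0P hM hφ
  | not _ ih => exact ih.not hM
  | and _ _ ih₁ ih₂ => exact ih₁.and hM ih₂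
  | allMem j _ ih =>
    refine .of_forall_mem hM ((HasTrace.of_isDelta0P hM (.mem 0 j.succ)).imp hM ih)
      fun t ht => ⟨t, ht, fun _ => id, fun x hx => ?_⟩
    simp only [realize_all, realize_imp, realize_mem, Fin.cons_zero, Fin.cons_succ]
    exact ⟨fun h z _ => h z, fun h z hz => h z (ht _ (hx j) z hz) hz⟩
  | allSub j _ ih =>
    refine .of_forall_mem hM ((HasTrace.of_isDelta0P hM (.subeq 0 j.succ)).imp hM ih)
      fun t ht => ?_
    -- subsets of elements of `t` are elements of `𝒫 (⋃ t)`
    obtain ⟨U, hU⟩ := hM.unionAx t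
    obtain ⟨P, hP⟩ := hM.powerAx U
    obtain ⟨c, hc⟩ := exists_union hM t P
    obtain ⟨t', ht', hct'⟩ := exists_isTrans_superset hM c
    refine ⟨t', ht', fun z hz => hct' z ((hc z).2 (.inl hz)), fun x hx => ?_⟩
    simp only [realize_all, realize_imp, realize_subeq, Fin.cons_zero, Fin.cons_succ]
    exact ⟨fun h z _ => h z, fun h z hz => h z (hct' z ((hc z).2 (.inr ((hP z).2
      fun w hw => (hU w).2 ⟨x j, hx j, hz w hw⟩)))) hz⟩

end Traces

section Schemes

variable {M : Type*} {E : M → M → Prop} {Γ : (n : ℕ) → Fml n → Prop}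

theorem sepScheme_of_hasTrace (hM : KPP E) (h : ∀ {m : ℕ} {φ : Fml m}, Γ m φ → HasTrace E φ) :
    SepScheme E Γ := by
  intro n φ hφ v a
  obtain ⟨t, ht, hat⟩ := exists_isTrans_forall_mem hM (Fin.cons a v)
  obtain ⟨T, hT⟩ := h hφ t ht
  obtain ⟨r, hr⟩ := exists_tup hM v
  obtain ⟨b, hb⟩ := hM.sepDelta0P 2 (Fml.opairMem 1 0 2) (.opairMem 1 0 2) ![T, r] a
  refine ⟨b, fun u => (hb u).trans (and_congr_right fun hu => ?_)⟩
  obtain ⟨q, hq⟩ := exists_isOPair hM.extensionality hM.pairAx u r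
  have hut : ∀ i, E ((Fin.cons u v : Fin (n + 1) → M) i) t :=
    Fin.cases (ht a (by simpa using hat 0) u hu) fun i => by simpa using hat i.succ
  rw [realize_opairMem hM.extensionality hM.pairAx, ← hT _ q hut ⟨r, hq, hr⟩,
    hq.mem_iff_exists hM.extensionality]
  rfl

theorem fndScheme_of_sepScheme (hM : KPP E) (hsep : SepScheme E Γ) : FndScheme E Γ := by
  rintro n φ hφ v ⟨a, ha⟩
  obtain ⟨t, ht, hat⟩ := exists_isTrans_mem hM a
  obtain ⟨A, hA⟩ := hsep n φ hφ v t
  obtain ⟨m, hmA, hmin⟩ := exists_minimal hM ⟨a, (hA a).2 ⟨hat, ha⟩⟩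
  obtain ⟨hmt, hm⟩ := (hA m).1 hmA
  exact ⟨m, hm, fun u hu hφu => hmin u hu ((hA u).2 ⟨ht m hmt u hu, hφu⟩)⟩

end Schemes

end SetTh

open SetTh in
theorem stmt_10_general {M : Type} (E : M → M → Prop) (hM : KPP E) (k : ℕ)
    (hsep : SepScheme E (IsSigmaP k)) : FndScheme E (IsBP k) :=
  fndScheme_of_sepScheme hM (sepScheme_of_hasTrace hM (hasTrace_of_isBP hM hsep))

open SetTh in
/-- Over KP^P, for each `k ≥ 1`, Σ_k^P-Separation implies B_k^P-Foundation. -/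
theorem stmt_10 {M : Type} (E : M → M → Prop) (hM : KPP E) (k : ℕ) (hk : 1 ≤ k)
    (hsep : SepScheme E (IsSigmaP k)) : FndScheme E (IsBP k) :=
  stmt_10_general E hM k hsep
end

section
/- Let M ⊨ KP^P and let i be a rank-initial self-embedding of M whose fixed-point set S = Fix(i) is a rank-initial substructure of M. Then S is a Σ₁^P-elementary substructure of M. -/
namespace SetTh

/-! ### Auxiliary infrastructure for stmt_15 -/

namespace Aux

open Fml

/-- Bounded universal: `∀ x ∈ xⱼ, φ`. -/
def ball {n : ℕ} (j : Fin n) (φ : Fml (n + 1)) : Fml n :=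
  Fml.all (Fml.imp (Fml.mem (0 : Fin (n + 1)) j.succ) φ)

/-- Bounded existential: `∃ x ∈ xⱼ, φ`. -/
def bex {n : ℕ} (j : Fin n) (φ : Fml (n + 1)) : Fml n :=
  Fml.not (ball j (Fml.not φ))

/-- Subset-bounded universal: `∀ x ⊆ xⱼ, φ`. -/
def ballS {n : ℕ} (j : Fin n) (φ : Fml (n + 1)) : Fml n :=
  Fml.all (Fml.imp (Fml.subeq (0 : Fin (n + 1)) j.succ) φ)

/-- Subset-bounded existential: `∃ x ⊆ xⱼ, φ`. -/
def bexS {n : ℕ} (j : Fin n) (φ : Fml (n + 1)) : Fml n :=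
  Fml.not (ballS j (Fml.not φ))

section RealizeLemmas

variable {M : Type*} {E : M → M → Prop} {n : ℕ}

@[simp] lemma realize_mem {i j : Fin n} {v : Fin n → M} :
    Realize E n (Fml.mem i j) v ↔ E (v i) (v j) := Iff.rfl

@[simp] lemma realize_eq {i j : Fin n} {v : Fin n → M} :
    Realize E n (Fml.eq i j) v ↔ v i = v j := Iff.rfl

@[simp] lemma realize_not {φ : Fml n} {v : Fin n → M} :
    Realize E n (Fml.not φ) v ↔ ¬ Realize E n φ v := Iff.rfl

@[simp] lemma realize_and {φ ψ : Fml n} {v : Fin n → M} :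
    Realize E n (Fml.and φ ψ) v ↔ Realize E n φ v ∧ Realize E n ψ v := Iff.rfl

@[simp] lemma realize_all {φ : Fml (n + 1)} {v : Fin n → M} :
    Realize E n (Fml.all φ) v ↔ ∀ x : M, Realize E (n + 1) φ (Fin.cons x v) := Iff.rfl

@[simp] lemma realize_or {φ ψ : Fml n} {v : Fin n → M} :
    Realize E n (Fml.or φ ψ) v ↔ Realize E n φ v ∨ Realize E n ψ v := by
  simp [Fml.or, Realize]; tauto

@[simp] lemma realize_imp {φ ψ : Fml n} {v : Fin n → M} :
    Realize E n (Fml.imp φ ψ) v ↔ (Realize E n φ v → Realize E n ψ v) := by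
  simp [Fml.imp]; tauto

@[simp] lemma realize_ex {φ : Fml (n + 1)} {v : Fin n → M} :
    Realize E n (Fml.ex φ) v ↔ ∃ x : M, Realize E (n + 1) φ (Fin.cons x v) := by
  simp [Fml.ex, Realize]

@[simp] lemma realize_subeq {i j : Fin n} {v : Fin n → M} :
    Realize E n (Fml.subeq i j) v ↔ ∀ z : M, E z (v i) → E z (v j) := by
  simp [Fml.subeq]

@[simp] lemma realize_ball {j : Fin n} {φ : Fml (n + 1)} {v : Fin n → M} :
    Realize E n (ball j φ) v ↔
      ∀ x : M, E x (v j) → Realize E (n + 1) φ (Fin.cons x v) := by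
  simp [ball]

@[simp] lemma realize_bex {j : Fin n} {φ : Fml (n + 1)} {v : Fin n → M} :
    Realize E n (bex j φ) v ↔
      ∃ x : M, E x (v j) ∧ Realize E (n + 1) φ (Fin.cons x v) := by
  simp only [bex, realize_not, realize_ball]; push_neg; rfl

@[simp] lemma realize_ballS {j : Fin n} {φ : Fml (n + 1)} {v : Fin n → M} :
    Realize E n (ballS j φ) v ↔
      ∀ x : M, (∀ z, E z x → E z (v j)) → Realize E (n + 1) φ (Fin.cons x v) := by
  simp [ballS]

@[simp] lemma realize_bexS {j : Fin n} {φ : Fml (n + 1)} {v : Fin n → M} :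
    Realize E n (bexS j φ) v ↔
      ∃ x : M, (∀ z, E z x → E z (v j)) ∧ Realize E (n + 1) φ (Fin.cons x v) := by
  simp only [bexS, realize_not, realize_ballS]; push_neg; rfl

lemma realize_rename {m : ℕ} (φ : Fml m) :
    ∀ {n : ℕ} (f : Fin m → Fin n) (v : Fin n → M),
      Realize E n (rename m n f φ) v ↔ Realize E m φ (v ∘ f) := by
  induction φ with
  | mem i j => intro n f v; exact Iff.rfl
  | eq i j => intro n f v; exact Iff.rfl
  | not φ ih => intro n f v; simp [rename, ih]
  | and φ ψ ih₁ ih₂ => intro n f v; simp [rename, ih₁, ih₂]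
  | all φ ih =>
      intro n f v
      simp only [rename, realize_all]
      refine forall_congr' fun x => ?_
      rw [ih]
      refine iff_of_eq (congrArg _ ?_)
      funext k
      cases k using Fin.cases with
      | zero => simp
      | succ k => simp

end RealizeLemmas

section Delta0PLemmas

lemma d0_subeq {n : ℕ} (i j : Fin n) : IsDelta0P n (Fml.subeq i j) :=
  IsDelta0P.allMem i (IsDelta0P.mem _ _)

lemma d0_or {n : ℕ} {φ ψ : Fml n} (h₁ : IsDelta0P n φ) (h₂ : IsDelta0P n ψ) :
    IsDelta0P n (Fml.or φ ψ) :=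
  IsDelta0P.not (IsDelta0P.and (IsDelta0P.not h₁) (IsDelta0P.not h₂))

lemma d0_imp {n : ℕ} {φ ψ : Fml n} (h₁ : IsDelta0P n φ) (h₂ : IsDelta0P n ψ) :
    IsDelta0P n (Fml.imp φ ψ) :=
  d0_or (IsDelta0P.not h₁) h₂

lemma d0_ball {n : ℕ} (j : Fin n) {φ : Fml (n + 1)} (h : IsDelta0P (n + 1) φ) :
    IsDelta0P n (ball j φ) :=
  IsDelta0P.allMem j h

lemma d0_bex {n : ℕ} (j : Fin n) {φ : Fml (n + 1)} (h : IsDelta0P (n + 1) φ) :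
    IsDelta0P n (bex j φ) :=
  IsDelta0P.not (d0_ball j (IsDelta0P.not h))

lemma d0_ballS {n : ℕ} (j : Fin n) {φ : Fml (n + 1)} (h : IsDelta0P (n + 1) φ) :
    IsDelta0P n (ballS j φ) :=
  IsDelta0P.allSub j h

lemma d0_bexS {n : ℕ} (j : Fin n) {φ : Fml (n + 1)} (h : IsDelta0P (n + 1) φ) :
    IsDelta0P n (bexS j φ) :=
  IsDelta0P.not (d0_ballS j (IsDelta0P.not h))

lemma fin_cases_one {n : ℕ} {β : Sort*} (z : β) (s : Fin (n + 1) → β) :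
    (Fin.cases z s : Fin (n + 2) → β) 1 = s 0 := by
  rw [← Fin.succ_zero_eq_one]; exact Fin.cases_succ 0

lemma d0_rename {m : ℕ} {φ : Fml m} (h : IsDelta0P m φ) :
    ∀ {n : ℕ} (f : Fin m → Fin n), IsDelta0P n (rename m n f φ) := by
  induction h with
  | mem i j => intro n f; exact IsDelta0P.mem _ _
  | eq i j => intro n f; exact IsDelta0P.eq _ _
  | not _ ih => intro n f; exact IsDelta0P.not (ih f)
  | and _ _ ih₁ ih₂ => intro n f; exact IsDelta0P.and (ih₁ f) (ih₂ f)
  | @allMem m j φ _ ih =>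
      intro n f
      have : rename m n f (ball j φ) =
          ball (f j) (rename (m+1) (n+1)
            (fun k => Fin.cases (0 : Fin (n + 1)) (fun i => (f i).succ) k) φ) := by
        simp [ball, rename, Fml.imp, Fml.or]
      exact this ▸ d0_ball (f j) (ih _)
  | @allSub m j φ _ ih =>
      intro n f
      have : rename m n f (ballS j φ) =
          ballS (f j) (rename (m+1) (n+1)
            (fun k => Fin.cases (0 : Fin (n + 1)) (fun i => (f i).succ) k) φ) := by
        simp [ballS, rename, Fml.imp, Fml.or, Fml.subeq, fin_cases_one]
      exact this ▸ d0_ballS (f j) (ih _)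

end Delta0PLemmas

section Transfer

variable {A : Type*} {M : Type*} {EA : A → A → Prop} {E : M → M → Prop} {j : A → M}

/-- Transfer of Δ₀^P formulas along an initial embedding whose range is closed
downwards under membership and subsets. -/
lemma transfer (hinj : Function.Injective j)
    (hrel : ∀ a b : A, EA a b ↔ E (j a) (j b))
    (hmem : ∀ (a : A) (x : M), E x (j a) → ∃ a', j a' = x)
    (hsub : ∀ (a : A) (x : M), (∀ z, E z x → E z (j a)) → ∃ a', j a' = x) :
    ∀ {n : ℕ} {φ : Fml n}, IsDelta0P n φ → ∀ (v : Fin n → A),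
      Realize EA n φ v ↔ Realize E n φ (j ∘ v) := by
  have hsubiff : ∀ a b : A, (∀ z, EA z a → EA z b) ↔ (∀ z, E z (j a) → E z (j b)) := by
    intro a b
    constructor
    · intro H z hz
      obtain ⟨z', rfl⟩ := hmem a z hz
      exact (hrel _ _).1 (H z' ((hrel _ _).2 hz))
    · intro H z hz
      exact (hrel _ _).2 (H (j z) ((hrel _ _).1 hz))
  intro n φ h
  induction h with
  | mem i k => intro v; exact hrel _ _
  | eq i k => intro v; simpa using (hinj.eq_iff (a := v i) (b := v k)).symm
  | not _ ih => intro v; simp [ih]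
  | and _ _ ih₁ ih₂ => intro v; simp [ih₁, ih₂]
  | @allMem n k φ _ ih =>
      intro v
      show Realize EA n (ball k φ) v ↔ Realize E n (ball k φ) (j ∘ v)
      simp only [realize_ball]
      constructor
      · intro H x hx
        obtain ⟨a', rfl⟩ := hmem (v k) x (by simpa using hx)
        have h1 : EA a' (v k) := (hrel _ _).2 (by simpa using hx)
        have := (ih (Fin.cons a' v)).1 (H a' h1)
        simpa [Fin.comp_cons] using this
      · intro H a' ha'
        have h1 : E (j a') ((j ∘ v) k) := by simpa using (hrel _ _).1 ha'
        have := H (j a') h1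
        rw [← Fin.comp_cons] at this
        exact (ih (Fin.cons a' v)).2 this
  | @allSub n k φ _ ih =>
      intro v
      show Realize EA n (ballS k φ) v ↔ Realize E n (ballS k φ) (j ∘ v)
      simp only [realize_ballS]
      constructor
      · intro H x hx
        obtain ⟨a', rfl⟩ := hsub (v k) x (by simpa using hx)
        have h1 : ∀ z, EA z a' → EA z (v k) := by
          rw [hsubiff]; simpa using hx
        have := (ih (Fin.cons a' v)).1 (H a' h1)
        simpa [Fin.comp_cons] using this
      · intro H a' ha'
        have h1 : ∀ z, E z (j a') → E z ((j ∘ v) k) := by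
          simpa using (hsubiff _ _).1 ha'
        have := H (j a') h1
        rw [← Fin.comp_cons] at this
        exact (ih (Fin.cons a' v)).2 this

end Transfer

section ConsLemmas

variable {β : Sort*} {n : ℕ}

lemma fin_one_eq_mk : (1 : Fin (n + 2)) = ⟨1, by omega⟩ := by
  ext; simp

lemma fin_two_eq_mk : (2 : Fin (n + 3)) = ⟨2, by omega⟩ := by
  ext
  show 2 % (n + 3) = 2
  exact Nat.mod_eq_of_lt (by omega)

lemma fin_zero_eq_mk : (0 : Fin (n + 1)) = ⟨0, by omega⟩ := rfl

@[simp] lemma cons_mk_succ (x : β) (v : Fin (n + 1) → β) (k : ℕ) (h : k + 1 < n + 2) :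
    (Fin.cons x v : Fin (n + 2) → β) ⟨k + 1, h⟩ = v ⟨k, Nat.lt_of_succ_lt_succ h⟩ :=
  by exact Fin.cons_succ (α := fun _ : Fin (n + 2) => β) x v ⟨k, Nat.lt_of_succ_lt_succ h⟩

@[simp] lemma cons_mk_zero (x : β) (v : Fin (n + 1) → β) (h : 0 < n + 2) :
    (Fin.cons x v : Fin (n + 2) → β) ⟨0, h⟩ = x :=
  by exact Fin.cons_zero (α := fun _ : Fin (n + 2) => β) x v

@[simp] lemma cons_mk_one (x : β) (v : Fin (n + 1) → β) (h : 1 < n + 2) :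
    (Fin.cons x v : Fin (n + 2) → β) ⟨1, h⟩ = v 0 := by
  have := cons_mk_succ x v 0 h
  rwa [← fin_zero_eq_mk] at this

@[simp] lemma cons_mk_two (x : β) (v : Fin (n + 2) → β) (h : 2 < n + 3) :
    (Fin.cons x v : Fin (n + 3) → β) ⟨2, h⟩ = v 1 := by
  have := cons_mk_succ x v 1 h
  rwa [← fin_one_eq_mk] at this

@[simp] lemma cons_mk_three (x : β) (v : Fin (n + 3) → β) (h : 3 < n + 4) :
    (Fin.cons x v : Fin (n + 4) → β) ⟨3, h⟩ = v 2 := by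
  have := cons_mk_succ x v 2 h
  rwa [← fin_two_eq_mk] at this

@[simp] lemma cons_one' (x : β) (v : Fin (n + 1) → β) :
    (Fin.cons x v : Fin (n + 2) → β) 1 = v 0 := by
  rw [fin_one_eq_mk, cons_mk_one]

@[simp] lemma cons_two' (x : β) (v : Fin (n + 2) → β) :
    (Fin.cons x v : Fin (n + 3) → β) 2 = v 1 := by
  rw [fin_two_eq_mk, cons_mk_two]

end ConsLemmas

section Semantics

variable {M : Type} (E : M → M → Prop)

/-- `x ⊆ y`. -/
def Sub (x y : M) : Prop := ∀ z, E z x → E z y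

/-- `a` is supertransitive: members' subsets are members. -/
def StC (a : M) : Prop := ∀ b, E b a → ∀ u, Sub E u b → E u a

/-- `a` is transitive. -/
def TrC (a : M) : Prop := ∀ b, E b a → ∀ z, E z b → E z a

/-- every member of `a` is a subset of some member of `A` that is a member of `a`. -/
def LevIn (A a : M) : Prop := ∀ u, E u a → ∃ b, E b A ∧ E b a ∧ Sub E u b

/-- `A` is a chain of `V`-like levels. -/
def Chain (A : M) : Prop := ∀ a, E a A → LevIn E A a ∧ StC E a ∧ TrC E a

/-- `x` belongs to some level of some chain. -/
def Covered (x : M) : Prop := ∃ A, Chain E A ∧ ∃ a, E a A ∧ E x a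

/-- `a` is a level: supertransitive, transitive, and there is a chain of levels
below it witnessing levelhood. -/
def LvlP (a : M) : Prop :=
  StC E a ∧ TrC E a ∧
    ∃ A₁, Sub E A₁ a ∧
      (∀ b, E b A₁ → E b a ∧ StC E b ∧ TrC E b ∧ LevIn E A₁ b) ∧
      (∀ u, E u a → ∃ b, E b A₁ ∧ Sub E u b)

end Semantics

section Formulas

/-- `StC` of variable 0. -/
def C2f : Fml 1 := ball 0 (ballS 0 (.mem 0 ⟨2, by omega⟩))

/-- `TrC` of variable 0. -/
def C3f : Fml 1 := ball 0 (ball 0 (.mem 0 ⟨2, by omega⟩))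

/-- `LevIn` with variable 0 = `a`, variable 1 = `A`. -/
def C1f : Fml 2 :=
  ball 0 (bex ⟨2, by omega⟩ (.and (.mem 0 ⟨2, by omega⟩) (.subeq 1 0)))

/-- `Chain` of variable 0. -/
def chainf : Fml 1 :=
  ball 0 (.and C1f (.and (rename 1 2 (fun _ => 0) C2f) (rename 1 2 (fun _ => 0) C3f)))

/-- variable 0 = `A` (chain), variable 1 = `x`: `A` is a chain covering `x`. -/
def covChi : Fml 2 :=
  .and (rename 1 2 (fun _ => 0) chainf) (bex 0 (.mem ⟨2, by omega⟩ 0))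

/-- variable 0 = `x`: `x` is not covered. -/
def uncovf : Fml 1 := .all (.not covChi)

/-- Collection formula: variable 0 = `u` (element), variable 1 = `w` (chain covering `u`). -/
def collChi : Fml 2 :=
  .and (rename 1 2 (fun _ => 1) chainf) (bex 1 (.mem 1 0))

/-- Separation: variable 0 = `u`, parameter 1 = `a` : `u ∈ a`. -/
def sepMemf : Fml 2 := .mem 0 1

/-- Separation: variable 0 = `u`, parameter 1 = `A` : `∃ b ∈ A, u ⊆ b`. -/
def sepExtf : Fml 2 := bex 1 (.subeq 1 0)

/-- incomparability of variables 1 and 0 (in context 4). -/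
def incompf : Fml 4 :=
  .and (.not (.mem 1 0)) (.and (.not (.eq 1 0)) (.not (.mem 0 1)))

/-- variable 0 = `a`, parameters 1 = `A`, 2 = `A'`:
`a ∈ A` and `a` is incomparable with some `a' ∈ A'`. -/
def P1f : Fml 3 := .and (.mem 0 1) (bex ⟨2, by omega⟩ incompf)

/-- variable 0 = `a'`, parameters 1 = `a₀`, 2 = `A'`: `a' ∈ A'` and `a₀, a'` incomparable. -/
def P2f : Fml 3 :=
  .and (.mem 0 ⟨2, by omega⟩)
    (.and (.not (.mem 1 0)) (.and (.not (.eq 1 0)) (.not (.mem 0 1))))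

/-- `LvlP` of variable 0. -/
def lvlf : Fml 1 :=
  .and C2f (.and C3f (bexS 0 (.and
    (ball 0 (.and (.mem 0 ⟨2, by omega⟩) (.and (rename 1 3 (fun _ => 0) C2f)
      (.and (rename 1 3 (fun _ => 0) C3f) (rename 2 3 (fun k => ⟨k.1, by omega⟩) C1f)))))
    (ball 1 (bex 1 (.subeq 1 0))))))

section FormulaRealize

variable {M : Type} {E : M → M → Prop}

lemma realize_C2f (v : Fin 1 → M) : Realize E 1 C2f v ↔ StC E (v 0) := by
  simp [C2f, StC, Sub]

lemma realize_C3f (v : Fin 1 → M) : Realize E 1 C3f v ↔ TrC E (v 0) := by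
  simp [C3f, TrC]

lemma realize_C1f (v : Fin 2 → M) : Realize E 2 C1f v ↔ LevIn E (v 1) (v 0) := by
  simp [C1f, LevIn, Sub]

lemma realize_chainf (v : Fin 1 → M) : Realize E 1 chainf v ↔ Chain E (v 0) := by
  simp only [chainf, realize_ball, realize_and, realize_rename, realize_C1f, realize_C2f,
    realize_C3f, Chain, Function.comp_apply, Fin.cons_zero, cons_one', Nat.reduceAdd]

lemma realize_covChi (v : Fin 2 → M) :
    Realize E 2 covChi v ↔ Chain E (v 0) ∧ ∃ a, E a (v 0) ∧ E (v 1) a := by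
  simp only [covChi, realize_and, realize_rename, realize_chainf, realize_bex, realize_mem,
    Function.comp_apply, Fin.cons_zero, cons_mk_two, cons_one', Nat.reduceAdd]

lemma realize_uncovf (v : Fin 1 → M) : Realize E 1 uncovf v ↔ ¬ Covered E (v 0) := by
  have h : ∀ A : M, Realize E 2 covChi (Fin.cons A v) ↔
      (Chain E A ∧ ∃ a, E a A ∧ E (v 0) a) := by
    intro A
    rw [realize_covChi]
    simp
  simp only [uncovf, realize_all, realize_not, Covered, not_exists]
  exact forall_congr' fun A => by rw [h A]

lemma realize_collChi (v : Fin 2 → M) :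
    Realize E 2 collChi v ↔ Chain E (v 1) ∧ ∃ a, E a (v 1) ∧ E (v 0) a := by
  simp only [collChi, realize_and, realize_rename, realize_chainf, realize_bex, realize_mem,
    Function.comp_apply, Fin.cons_zero, cons_one', Nat.reduceAdd]

lemma realize_sepMemf (v : Fin 2 → M) : Realize E 2 sepMemf v ↔ E (v 0) (v 1) := Iff.rfl

lemma realize_sepExtf (v : Fin 2 → M) :
    Realize E 2 sepExtf v ↔ ∃ b, E b (v 1) ∧ Sub E (v 0) b := by
  simp [sepExtf, Sub]

lemma realize_P1f (v : Fin 3 → M) :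
    Realize E 3 P1f v ↔ E (v 0) (v 1) ∧
      ∃ a', E a' (v 2) ∧ ¬ E (v 0) a' ∧ v 0 ≠ a' ∧ ¬ E a' (v 0) := by
  simp [P1f, incompf]

lemma realize_P2f (v : Fin 3 → M) :
    Realize E 3 P2f v ↔ E (v 0) (v 2) ∧ ¬ E (v 1) (v 0) ∧ v 1 ≠ v 0 ∧ ¬ E (v 0) (v 1) := by
  simp [P2f]

lemma realize_lvlf (v : Fin 1 → M) : Realize E 1 lvlf v ↔ LvlP E (v 0) := by
  simp only [lvlf, realize_and, realize_C2f, realize_C3f, realize_bexS, realize_ball,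
    realize_bex, realize_mem, realize_subeq, realize_rename, realize_C1f,
    Function.comp_apply, Fin.cons_zero, cons_one', cons_two', cons_mk_succ, LvlP, Sub]
  constructor
  · rintro ⟨h2, h3, A₁, hsub, hB, hC⟩
    refine ⟨h2, h3, A₁, hsub, fun b hb => ?_, fun u hu => ?_⟩
    · obtain ⟨h1, h2', h3', h4'⟩ := hB b hb
      exact ⟨h1, h2', h3', by simpa using h4'⟩
    · obtain ⟨b, hb, hub⟩ := hC u hu
      exact ⟨b, hb, hub⟩
  · rintro ⟨h2, h3, A₁, hsub, hB, hC⟩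
    refine ⟨h2, h3, A₁, hsub, fun b hb => ?_, fun u hu => ?_⟩
    · obtain ⟨h1, h2', h3', h4'⟩ := hB b hb
      exact ⟨h1, h2', h3', by simpa using h4'⟩
    · obtain ⟨b, hb, hub⟩ := hC u hu
      exact ⟨b, hb, hub⟩

end FormulaRealize

section FormulaD0

lemma d0_C2f : IsDelta0P 1 C2f := d0_ball _ (d0_ballS _ (.mem _ _))

lemma d0_C3f : IsDelta0P 1 C3f := d0_ball _ (d0_ball _ (.mem _ _))

lemma d0_C1f : IsDelta0P 2 C1f := d0_ball _ (d0_bex _ (.and (.mem _ _) (d0_subeq _ _)))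

lemma d0_chainf : IsDelta0P 1 chainf :=
  d0_ball _ (.and d0_C1f (.and (d0_rename d0_C2f _) (d0_rename d0_C3f _)))

lemma d0_covChi : IsDelta0P 2 covChi :=
  .and (d0_rename d0_chainf _) (d0_bex _ (.mem _ _))

lemma d0_collChi : IsDelta0P 2 collChi :=
  .and (d0_rename d0_chainf _) (d0_bex _ (.mem _ _))

lemma d0_sepMemf : IsDelta0P 2 sepMemf := .mem _ _

lemma d0_sepExtf : IsDelta0P 2 sepExtf := d0_bex _ (d0_subeq _ _)

lemma d0_P1f : IsDelta0P 3 P1f :=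
  .and (.mem _ _) (d0_bex _ (.and (.not (.mem _ _))
    (.and (.not (.eq _ _)) (.not (.mem _ _)))))

lemma d0_P2f : IsDelta0P 3 P2f :=
  .and (.mem _ _) (.and (.not (.mem _ _)) (.and (.not (.eq _ _)) (.not (.mem _ _))))

lemma d0_lvlf : IsDelta0P 1 lvlf :=
  .and d0_C2f (.and d0_C3f (d0_bexS _ (.and
    (d0_ball _ (.and (.mem _ _) (.and (d0_rename d0_C2f _)
      (.and (d0_rename d0_C3f _) (d0_rename d0_C1f _)))))
    (d0_ball _ (d0_bex _ (d0_subeq _ _))))))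

end FormulaD0

end Formulas

section Toolkit

variable {M : Type} {E : M → M → Prop}

lemma nonempty_of_KPP (hM : KPP E) : Nonempty M :=
  hM.2.2.2.2.1.elim fun x _ => ⟨x⟩

lemma sep_of_KPP (hM : KPP E) : SepScheme E IsDelta0P := hM.2.2.2.2.2.1

lemma coll_of_KPP (hM : KPP E) : CollScheme E IsDelta0P := hM.2.2.2.2.2.2.1

lemma fnd_of_KPP (hM : KPP E) : FndScheme E (IsPiP 1) := hM.2.2.2.2.2.2.2

/-- Foundation for Δ₀^P classes. -/
lemma found_d0 (hM : KPP E) {n : ℕ} {φ : Fml (n + 1)} (hφ : IsDelta0P (n + 1) φ)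
    (v : Fin n → M) (hex : ∃ a, Realize E (n + 1) φ (Fin.cons a v)) :
    ∃ a, Realize E (n + 1) φ (Fin.cons a v) ∧
      ∀ u, E u a → ¬ Realize E (n + 1) φ (Fin.cons u v) := by
  have hne : Nonempty M := nonempty_of_KPP hM
  set ψ := rename (n + 1) (n + 2) Fin.succ φ with hψ
  have hpi : IsPiP 1 (n + 1) (Fml.all ψ) := ⟨ψ, rfl, d0_rename hφ Fin.succ⟩
  have hkey : ∀ w : Fin (n + 1) → M,
      Realize E (n + 1) (Fml.all ψ) w ↔ Realize E (n + 1) φ w := by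
    intro w
    rw [realize_all]
    constructor
    · intro H
      obtain ⟨x⟩ := hne
      have := H x
      rw [hψ, realize_rename] at this
      have hcomp : (Fin.cons x w) ∘ Fin.succ = w := funext fun k => by simp
      rwa [hcomp] at this
    · intro H x
      rw [hψ, realize_rename]
      have hcomp : (Fin.cons x w) ∘ Fin.succ = w := funext fun k => by simp
      rwa [hcomp]
  obtain ⟨a, ha1, ha2⟩ := fnd_of_KPP hM n (Fml.all ψ) hpi v (hex.imp fun a h => (hkey _).2 h)
  exact ⟨a, (hkey _).1 ha1, fun u hu h => ha2 u hu ((hkey _).2 h)⟩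

/-- `A ∪ {ℓ}` exists. -/
lemma ex_addElem (hM : KPP E) (A ℓ : M) : ∃ B, ∀ z, E z B ↔ (E z A ∨ z = ℓ) := by
  obtain ⟨s, hs⟩ := hM.2.1 ℓ ℓ
  obtain ⟨p, hp⟩ := hM.2.1 A s
  obtain ⟨u, hu⟩ := hM.2.2.1 p
  refine ⟨u, fun z => ?_⟩
  rw [hu]
  constructor
  · rintro ⟨w, hw, hzw⟩
    rcases (hp w).1 hw with rfl | rfl
    · exact Or.inl hzw
    · rcases (hs z).1 hzw with rfl | rfl <;> exact Or.inr rfl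
  · rintro (hz | rfl)
    · exact ⟨A, (hp A).2 (Or.inl rfl), hz⟩
    · exact ⟨s, (hp s).2 (Or.inr rfl), (hs z).2 (Or.inl rfl)⟩

/-- The next level above a chain exists. -/
lemma ex_ext (hM : KPP E) (A : M) : ∃ ℓ, ∀ u, E u ℓ ↔ ∃ b, E b A ∧ Sub E u b := by
  obtain ⟨uA, huA⟩ := hM.2.2.1 A
  obtain ⟨pA, hpA⟩ := hM.2.2.2.1 uA
  obtain ⟨ℓ, hℓ⟩ := sep_of_KPP hM 1 sepExtf d0_sepExtf (fun _ => A) pA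
  refine ⟨ℓ, fun u => ?_⟩
  rw [hℓ u, realize_sepExtf]
  simp only [Fin.cons_zero, cons_one']
  constructor
  · rintro ⟨_, h⟩; exact h
  · rintro ⟨b, hbA, hub⟩
    refine ⟨(hpA u).2 fun r hr => ?_, ⟨b, hbA, hub⟩⟩
    exact (huA r).2 ⟨b, hbA, hub r hr⟩

/-- Chains can be extended by one more level. -/
lemma chain_extend (hM : KPP E) {A : M} (hA : Chain E A) :
    ∃ ℓ A', (∀ u, E u ℓ ↔ ∃ b, E b A ∧ Sub E u b) ∧ Chain E A' ∧
      (∀ z, E z A' ↔ (E z A ∨ z = ℓ)) := by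
  obtain ⟨ℓ, hℓ⟩ := ex_ext hM A
  obtain ⟨A', hA'⟩ := ex_addElem hM A ℓ
  refine ⟨ℓ, A', hℓ, ?_, hA'⟩
  intro a haA'
  rcases (hA' a).1 haA' with ha | rfl
  · obtain ⟨h1, h2, h3⟩ := hA a ha
    exact ⟨fun u hu => (h1 u hu).imp fun b hb => ⟨(hA' b).2 (Or.inl hb.1), hb.2⟩, h2, h3⟩
  · refine ⟨?_, ?_, ?_⟩
    · intro u hu
      obtain ⟨b, hbA, hub⟩ := (hℓ u).1 hu
      exact ⟨b, (hA' b).2 (Or.inl hbA), (hℓ b).2 ⟨b, hbA, fun z hz => hz⟩, hub⟩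
    · intro b hb u hub
      obtain ⟨b', hb'A, hbb'⟩ := (hℓ b).1 hb
      exact (hℓ u).2 ⟨b', hb'A, fun z hz => hbb' z (hub z hz)⟩
    · intro b hb z hz
      obtain ⟨b', hb'A, hbb'⟩ := (hℓ b).1 hb
      have hzb' : E z b' := hbb' z hz
      obtain ⟨c, hcA, _, hzc⟩ := (hA b' hb'A).1 z hzb'
      exact (hℓ z).2 ⟨c, hcA, hzc⟩

/-- Every element of a model of KP^P lies in some level of some chain. -/
lemma covered_all (hM : KPP E) (x : M) : Covered E x := by
  by_contra hx
  have v₀ : Fin 0 → M := fun i => i.elim0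
  -- take an ∈-minimal uncovered x₀
  obtain ⟨x₀, hx₀, hmin⟩ := by
    refine fnd_of_KPP hM 0 uncovf ⟨Fml.not covChi, rfl, .not d0_covChi⟩ v₀ ⟨x, ?_⟩
    rw [realize_uncovf]
    simpa using hx
  rw [realize_uncovf] at hx₀
  simp only [Fin.cons_zero] at hx₀
  have helts : ∀ u, E u x₀ → Covered E u := by
    intro u hu
    have := hmin u hu
    rw [realize_uncovf] at this
    simpa using this
  -- collect covering chains for the elements of x₀
  obtain ⟨B, hB⟩ := by
    refine coll_of_KPP hM 0 collChi d0_collChi v₀ x₀ ?_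
    intro u hu
    obtain ⟨A, hA, a, haA, hua⟩ := helts u hu
    refine ⟨A, ?_⟩
    rw [realize_collChi]
    simp only [Fin.cons_zero, cons_one']
    exact ⟨hA, a, haA, hua⟩
  -- B' := the chains in B
  obtain ⟨B', hB'⟩ := sep_of_KPP hM 0 chainf d0_chainf v₀ B
  have hB'c : ∀ w, E w B' ↔ (E w B ∧ Chain E w) := by
    intro w
    rw [hB' w]
    constructor
    · rintro ⟨h1, h2⟩
      rw [realize_chainf] at h2
      simpa using ⟨h1, h2⟩
    · rintro ⟨h1, h2⟩
      refine ⟨h1, ?_⟩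
      rw [realize_chainf]
      simpa using h2
  -- A* := union of B'
  obtain ⟨As, hAs⟩ := hM.2.2.1 B'
  have hAsChain : Chain E As := by
    intro a ha
    obtain ⟨w, hwB', haw⟩ := (hAs a).1 ha
    obtain ⟨_, hw⟩ := (hB'c w).1 hwB'
    obtain ⟨h1, h2, h3⟩ := hw a haw
    exact ⟨fun u hu => (h1 u hu).imp fun b hb =>
      ⟨(hAs b).2 ⟨w, hwB', hb.1⟩, hb.2⟩, h2, h3⟩
  have hcov : ∀ y, E y x₀ → ∃ a, E a As ∧ E y a := by
    intro y hy
    obtain ⟨w, hwB, hw⟩ := hB y hy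
    rw [realize_collChi] at hw
    simp only [Fin.cons_zero, cons_one'] at hw
    obtain ⟨hcw, a, haw, hya⟩ := hw
    exact ⟨a, (hAs a).2 ⟨w, (hB'c w).2 ⟨hwB, hcw⟩, haw⟩, hya⟩
  -- extend twice
  obtain ⟨ℓ, A', hℓ, hA', hA'mem⟩ := chain_extend hM hAsChain
  obtain ⟨ℓ₂, A'', hℓ₂, hA'', hA''mem⟩ := chain_extend hM hA'
  have hx₀ℓ : Sub E x₀ ℓ := by
    intro y hy
    obtain ⟨a, haAs, hya⟩ := hcov y hy
    obtain ⟨b, hbAs, _, hyb⟩ := (hAsChain a haAs).1 y hya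
    exact (hℓ y).2 ⟨b, hbAs, hyb⟩
  have : E x₀ ℓ₂ := (hℓ₂ x₀).2 ⟨ℓ, (hA'mem ℓ).2 (Or.inr rfl), hx₀ℓ⟩
  exact hx₀ ⟨A'', hA'', ℓ₂, (hA''mem ℓ₂).2 (Or.inr rfl), this⟩

end Toolkit

section Levels

variable {M : Type} {E : M → M → Prop}

/-- Any two levels (members of chains) are comparable. -/
lemma lev_comp (hM : KPP E) {A A' a a' : M} (hA : Chain E A) (hA' : Chain E A')
    (ha : E a A) (ha' : E a' A') : E a a' ∨ a = a' ∨ E a' a := by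
  by_contra hcon
  push_neg at hcon
  obtain ⟨h1, h2, h3⟩ := hcon
  classical
  -- minimize a over members of A incomparable with some member of A'
  set v1 : Fin 2 → M := Fin.cons A (fun _ => A') with hv1
  have hreal1 : ∀ u : M, Realize E 3 P1f (Fin.cons u v1) ↔
      (E u A ∧ ∃ b, E b A' ∧ ¬ E u b ∧ u ≠ b ∧ ¬ E b u) := by
    intro u
    rw [realize_P1f]
    simp [hv1]
  obtain ⟨a₀, ha₀, hmin₀⟩ := found_d0 hM d0_P1f v1 ⟨a, (hreal1 a).2 ⟨ha, a', ha', h1, h2, h3⟩⟩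
  rw [hreal1] at ha₀
  obtain ⟨ha₀A, b₀, hb₀A', hic⟩ := ha₀
  have hmin₀' : ∀ u, E u a₀ → E u A → ∀ b, E b A' → (E u b ∨ u = b ∨ E b u) := by
    intro u hu huA b hbA'
    by_contra hc
    push_neg at hc
    exact hmin₀ u hu ((hreal1 u).2 ⟨huA, b, hbA', hc.1, hc.2.1, hc.2.2⟩)
  -- minimize a' over members of A' incomparable with a₀
  set v2 : Fin 2 → M := Fin.cons a₀ (fun _ => A') with hv2
  have hreal2 : ∀ u : M, Realize E 3 P2f (Fin.cons u v2) ↔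
      (E u A' ∧ ¬ E a₀ u ∧ a₀ ≠ u ∧ ¬ E u a₀) := by
    intro u
    rw [realize_P2f]
    simp [hv2]
  obtain ⟨a₁, ha₁, hmin₁⟩ := found_d0 hM d0_P2f v2
    ⟨b₀, (hreal2 b₀).2 ⟨hb₀A', hic.1, hic.2.1, hic.2.2⟩⟩
  rw [hreal2] at ha₁
  obtain ⟨ha₁A', hn1, hn2, hn3⟩ := ha₁
  have hmin₁' : ∀ u, E u a₁ → E u A' → (E a₀ u ∨ a₀ = u ∨ E u a₀) := by
    intro u hu huA'
    by_contra hc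
    push_neg at hc
    exact hmin₁ u hu ((hreal2 u).2 ⟨huA', hc.1, hc.2.1, hc.2.2⟩)
  -- a₀ ⊆ a₁
  have hsub1 : ∀ u, E u a₀ → E u a₁ := by
    intro u hu
    obtain ⟨b, hbA, hba₀, hub⟩ := (hA a₀ ha₀A).1 u hu
    rcases hmin₀' b hba₀ hbA a₁ ha₁A' with hc | rfl | hc
    · exact (hA' a₁ ha₁A').2.1 b hc u hub
    · exact absurd hba₀ hn3
    · exact absurd ((hA a₀ ha₀A).2.2 b hba₀ a₁ hc) hn3
  -- a₁ ⊆ a₀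
  have hsub2 : ∀ u, E u a₁ → E u a₀ := by
    intro u hu
    obtain ⟨b, hbA', hba₁, hub⟩ := (hA' a₁ ha₁A').1 u hu
    rcases hmin₁' b hba₁ hbA' with hc | rfl | hc
    · exact absurd ((hA' a₁ ha₁A').2.2 b hba₁ a₀ hc) hn1
    · exact absurd hba₁ hn1
    · exact (hA a₀ ha₀A).2.1 b hc u hub
  exact hn2 (hM.1 a₀ a₁ fun u => ⟨hsub1 u, hsub2 u⟩)

/-- Every member of a chain is a level. -/
lemma lvlP_level (hM : KPP E) {A a : M} (hA : Chain E A) (ha : E a A) : LvlP E a := by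
  obtain ⟨A₁, hA₁⟩ := sep_of_KPP hM 1 sepMemf d0_sepMemf (fun _ => a) A
  have hA₁c : ∀ b, E b A₁ ↔ (E b A ∧ E b a) := by
    intro b
    rw [hA₁ b, realize_sepMemf]
    simp
  obtain ⟨hlev, hst, htr⟩ := hA a ha
  refine ⟨hst, htr, A₁, fun b hb => ((hA₁c b).1 hb).2, fun b hb => ?_, fun u hu => ?_⟩
  · obtain ⟨hbA, hba⟩ := (hA₁c b).1 hb
    obtain ⟨hlevb, hstb, htrb⟩ := hA b hbA
    refine ⟨hba, hstb, htrb, fun u hu => ?_⟩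
    obtain ⟨c, hcA, hcb, huc⟩ := hlevb u hu
    exact ⟨c, (hA₁c c).2 ⟨hcA, htr b hba c hcb⟩, hcb, huc⟩
  · obtain ⟨b, hbA, hba, hub⟩ := hlev u hu
    exact ⟨b, (hA₁c b).2 ⟨hbA, hba⟩, hub⟩

/-- Every level lies on a chain. -/
lemma lvlP_chain (hM : KPP E) {a : M} (h : LvlP E a) :
    ∃ A, Chain E A ∧ E a A := by
  obtain ⟨hst, htr, A₁, hsub, hB, hC⟩ := h
  obtain ⟨A, hAc⟩ := ex_addElem hM A₁ a
  refine ⟨A, ?_, (hAc a).2 (Or.inr rfl)⟩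
  intro c hc
  rcases (hAc c).1 hc with hcA₁ | rfl
  · obtain ⟨hca, hstc, htrc, hlevc⟩ := hB c hcA₁
    exact ⟨fun u hu => (hlevc u hu).imp fun b hb =>
      ⟨(hAc b).2 (Or.inl hb.1), hb.2⟩, hstc, htrc⟩
  · refine ⟨fun u hu => ?_, hst, htr⟩
    obtain ⟨b, hbA₁, hub⟩ := hC u hu
    exact ⟨b, (hAc b).2 (Or.inl hbA₁), (hB b hbA₁).1, hub⟩

end Levels

section Theta

variable {M : Type} {E : M → M → Prop}

/-- `a` is a level containing a witness of `ψ`. -/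
def thetaF {n : ℕ} (ψ : Fml (n + 1)) : Fml (n + 1) :=
  .and (rename 1 (n + 1) (fun _ => 0) lvlf)
    (bex 0 (rename (n + 1) (n + 2) (Fin.cases 0 fun k => k.succ.succ) ψ))

lemma d0_thetaF {n : ℕ} {ψ : Fml (n + 1)} (hψ : IsDelta0P (n + 1) ψ) :
    IsDelta0P (n + 1) (thetaF ψ) :=
  .and (d0_rename d0_lvlf _) (d0_bex _ (d0_rename hψ _))

lemma realize_thetaF {n : ℕ} {ψ : Fml (n + 1)} (a : M) (w : Fin n → M) :
    Realize E (n + 1) (thetaF ψ) (Fin.cons a w) ↔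
      (LvlP E a ∧ ∃ y, E y a ∧ Realize E (n + 1) ψ (Fin.cons y w)) := by
  have hcomp : ∀ y : M,
      (Fin.cons y (Fin.cons a w)) ∘ (Fin.cases 0 fun k => k.succ.succ) = Fin.cons y w := by
    intro y
    funext k
    cases k using Fin.cases with
    | zero => simp
    | succ k => simp
  simp only [thetaF, realize_and, realize_bex, realize_rename, realize_lvlf,
    Function.comp_apply, Fin.cons_zero, hcomp]

end Theta

section Endgame

variable {M : Type} {E : M → M → Prop}

/-- The hard direction: a Σ₁^P statement with fixed parameters and a witness in `M`
has a witness fixed by `i`. -/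
lemma hard_direction (hM : KPP E)
    (rk : M → M) (hrk : IsRankFn E rk) (i : M → M) (hemb : IsEmbedding E E i)
    (hri : IsRankInitialEmb E rk i)
    (hfixinit : ∀ x : M, i x = x → ∀ y : M, OrdLE E (rk y) (rk x) → i y = y)
    {n : ℕ} {ψ : Fml (n + 1)} (hψ : IsDelta0P (n + 1) ψ)
    (w : Fin n → M) (hw : ∀ k, i (w k) = w k)
    (hex : ∃ x, Realize E (n + 1) ψ (Fin.cons x w)) :
    ∃ x, i x = x ∧ Realize E (n + 1) ψ (Fin.cons x w) := by
  have hrk2 : ∀ x y : M, E y x → E (rk y) (rk x) := hrk.2.1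
  have hsubRank : ∀ x y : M, (∀ z, E z y → E z x) → OrdLE E (rk y) (rk x) := fun x y h =>
    hrk.2.2 y (rk x) (hrk.1 x) (fun z hz => hrk2 x z (h z hz))
  have hImem : ∀ (m : M) (x : M), E x (i m) → ∃ x', i x' = x := by
    intro m x h
    obtain ⟨x', hx'⟩ := hri m x (Or.inr (hrk2 (i m) x h))
    exact ⟨x', hx'⟩
  have hIsub : ∀ (m : M) (x : M), (∀ z, E z x → E z (i m)) → ∃ x', i x' = x := by
    intro m x h
    obtain ⟨x', hx'⟩ := hri m x (hsubRank (i m) x h)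
    exact ⟨x', hx'⟩
  have trI : ∀ {m : ℕ} {φ : Fml m}, IsDelta0P m φ → ∀ u : Fin m → M,
      Realize E m φ u ↔ Realize E m φ (i ∘ u) :=
    fun h u => transfer hemb.1 (fun a b => hemb.2 a b) hImem hIsub h u
  obtain ⟨x, hx⟩ := hex
  obtain ⟨A, hA, a, haA, hxa⟩ := covered_all hM x
  have hΘa : Realize E (n + 1) (thetaF ψ) (Fin.cons a w) :=
    (realize_thetaF a w).2 ⟨lvlP_level hM hA haA, x, hxa, hx⟩
  obtain ⟨a₀, hΘ₀, hminΘ⟩ := found_d0 hM (d0_thetaF hψ) w ⟨a, hΘa⟩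
  have hiw : ∀ c : M, i ∘ (Fin.cons c w) = Fin.cons (i c) w := by
    intro c; funext k
    cases k using Fin.cases with
    | zero => simp
    | succ k => simp [hw k]
  have hΘtrans : ∀ c : M, Realize E (n + 1) (thetaF ψ) (Fin.cons c w) ↔
      Realize E (n + 1) (thetaF ψ) (Fin.cons (i c) w) := by
    intro c
    have := trI (d0_thetaF hψ) (Fin.cons c w)
    rwa [hiw c] at this
  have hΘi : Realize E (n + 1) (thetaF ψ) (Fin.cons (i a₀) w) := (hΘtrans a₀).1 hΘ₀
  obtain ⟨hlv₀, x₀, hx₀a, hx₀⟩ := (realize_thetaF a₀ w).1 hΘ₀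
  obtain ⟨hlvi, -⟩ := (realize_thetaF (i a₀) w).1 hΘi
  obtain ⟨A₀, hA₀, ha₀A₀⟩ := lvlP_chain hM hlv₀
  obtain ⟨Ai, hAi, haiAi⟩ := lvlP_chain hM hlvi
  have heq : i a₀ = a₀ := by
    rcases lev_comp hM hA₀ hAi ha₀A₀ haiAi with h | h | h
    · -- a₀ ∈ i a₀ : pull back along i and contradict minimality
      obtain ⟨c, hc⟩ := hImem a₀ a₀ h
      have hca₀ : E c a₀ := (hemb.2 c a₀).2 (by rw [hc]; exact h)
      have hΘc : Realize E (n + 1) (thetaF ψ) (Fin.cons c w) := by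
        rw [hΘtrans c, hc]; exact hΘ₀
      exact absurd hΘc (hminΘ c hca₀)
    · exact h.symm
    · exact absurd hΘi (hminΘ (i a₀) h)
  have hx₀fix : i x₀ = x₀ := hfixinit a₀ heq x₀ (Or.inr (hrk2 a₀ x₀ hx₀a))
  exact ⟨x₀, hx₀fix, hx₀⟩

end Endgame

end Aux

end SetTh

open SetTh in
/-- Let `M ⊨ KP^P` and let `i` be a rank-initial self-embedding of `M` whose
fixed-point set `S = Fix(i)` is a rank-initial substructure of `M`. Then `S` is a
Σ₁^P-elementary substructure of `M`. -/
theorem stmt_15 {M : Type} (E : M → M → Prop) (hM : KPP E)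
    (rk : M → M) (hrk : IsRankFn E rk)
    (i : M → M) (hemb : IsEmbedding E E i)
    (hri : IsRankInitialEmb E rk i)
    (hfixinit : ∀ x : M, i x = x → ∀ y : M, OrdLE E (rk y) (rk x) → i y = y) :
    ∀ (n : ℕ) (σ : Fml n), IsSigmaP 1 n σ → ∀ v : Fin n → {x : M // i x = x},
      (Realize (fun a b : {x : M // i x = x} => E a.1 b.1) n σ v ↔
        Realize E n σ (fun a => (v a).1)) := by
  classical
  intro n σ hσ v
  have hσ' : ∃ ψ : Fml (n + 1), σ = Fml.ex ψ ∧ IsDelta0P (n + 1) ψ := hσ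
  obtain ⟨ψ, rfl, hψ⟩ := hσ'
  have hrk2 : ∀ x y : M, E y x → E (rk y) (rk x) := hrk.2.1
  have hsubRank : ∀ x y : M, (∀ z, E z y → E z x) → OrdLE E (rk y) (rk x) := fun x y h =>
    hrk.2.2 y (rk x) (hrk.1 x) (fun z hz => hrk2 x z (h z hz))
  have trS : ∀ {m : ℕ} {φ : Fml m}, IsDelta0P m φ →
      ∀ u : Fin m → {x : M // i x = x},
        Realize (fun a b : {x : M // i x = x} => E a.1 b.1) m φ u ↔
          Realize E m φ (Subtype.val ∘ u) :=
    fun h u =>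
      Aux.transfer (Subtype.val_injective) (fun _ _ => Iff.rfl)
        (fun s x hx => ⟨⟨x, hfixinit s.1 s.2 x (Or.inr (hrk2 s.1 x hx))⟩, rfl⟩)
        (fun s x hx => ⟨⟨x, hfixinit s.1 s.2 x (hsubRank s.1 x hx)⟩, rfl⟩) h u
  rw [Aux.realize_ex, Aux.realize_ex]
  have hval : ∀ xS : {x : M // i x = x},
      Subtype.val ∘ Fin.cons xS v = Fin.cons xS.1 (fun a => (v a).1) := by
    intro xS
    funext k
    cases k using Fin.cases with
    | zero => simp
    | succ k => simp
  constructor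
  · rintro ⟨xS, hxS⟩
    refine ⟨xS.1, ?_⟩
    have := (trS hψ (Fin.cons xS v)).1 hxS
    rwa [hval xS] at this
  · rintro ⟨x, hx⟩
    obtain ⟨x₀, hfix, hx₀⟩ := Aux.hard_direction hM rk hrk i hemb hri hfixinit hψ
      (fun a => (v a).1) (fun k => (v k).2) ⟨x, hx⟩
    refine ⟨⟨x₀, hfix⟩, ?_⟩
    rw [trS hψ (Fin.cons ⟨x₀, hfix⟩ v), hval ⟨x₀, hfix⟩]
    exact hx₀
end
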